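/- arXiv:2110.06077 — 5 statements merged into one kernel-verified Lean document; each statement's English description precedes it below -/
import Mathlib

section
/- Fix μ > 0. If P and Q are probability measures on [0,1] that are absolutely continuous with respect to Lebesgue measure, whose densities differ on a set of positive Lebesgue measure, and such that ℓ_μ[P] > −∞ and ℓ_μ[Q] > −∞, then for every t ∈ (0,1), ℓ_μ[(1−t)P + tQ] > (1−t)·ℓ_μ[P] + t·ℓ_μ[Q]. Consequently, ℓ_μ admits at most one maximizer among absolutely continuous probability measures on [0,1]. -/
open MeasureTheory Set Filter Topology
open scoped Classical

/-- Lebesgue measure restricted to `[0,1]` (this is the uniform probability measure `P_U`). -/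
noncomputable def lebI : Measure ℝ := volume.restrict (Set.Icc 0 1)

/-- A probability measure concentrated on `[0,1]`. -/
def IsProbOn (P : Measure ℝ) : Prop := IsProbabilityMeasure P ∧ P (Set.Icc (0:ℝ) 1)ᶜ = 0

/-- A probability density on `[0,1]`. -/
def IsDensity (f : ℝ → ℝ) : Prop :=
  Measurable f ∧ (∀ γ, 0 ≤ f γ) ∧ ∫ γ, f γ ∂lebI = 1

/-- The measure on `[0,1]` with Lebesgue density `f`. -/
noncomputable def densM (f : ℝ → ℝ) : Measure ℝ :=
  lebI.withDensity fun γ => ENNReal.ofReal (f γ)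

/-- Kullback–Leibler divergence `D(ν‖ρ)`, valued in `EReal`: it equals
`∫ log (dν/dρ) dν` when `ν ≪ ρ` and the log-likelihood ratio is `ν`-integrable,
and `+∞` otherwise. -/
noncomputable def KLdiv (ν ρ : Measure ℝ) : EReal :=
  if ν ≪ ρ ∧ Integrable (fun x => Real.log ((ν.rnDeriv ρ x).toReal)) ν
  then ((∫ x, Real.log ((ν.rnDeriv ρ x).toReal) ∂ν : ℝ) : EReal)
  else ⊤

/-- Implied marginal `p_MA(y) = ∫ p_A(y|γ) dP_M(γ)`. -/
noncomputable def margin (pA : ℕ → ℝ → ℝ) (P : Measure ℝ) (y : ℕ) : ℝ := ∫ γ, pA y γ ∂P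

/-- Mixture log-likelihood `ℓ[P_M] = ∑_y p̂(y) log p_MA(y)`, valued in `EReal`
(it is `−∞` when some `y` with `p̂(y) > 0` has zero implied marginal mass). -/
noncomputable def loglik (N : ℕ) (pA : ℕ → ℝ → ℝ) (phat : ℕ → ℝ) (P : Measure ℝ) : EReal :=
  if ∀ y ∈ Finset.range (N + 1), 0 < phat y → 0 < margin pA P y
  then ((∑ y ∈ Finset.range (N + 1), phat y * Real.log (margin pA P y) : ℝ) : EReal)
  else ⊥

/-- Regularized log-likelihood `ℓ_μ[P_M] = ℓ[P_M] − μ·D(P_U‖P_M)`. -/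
noncomputable def regLoglik (N : ℕ) (pA : ℕ → ℝ → ℝ) (phat : ℕ → ℝ) (μ : ℝ)
    (P : Measure ℝ) : EReal :=
  loglik N pA phat P - (μ : EReal) * KLdiv lebI P


/-!
The implied marginal `p_MA` is affine in `P_M`, so `ℓ` is concave by concavity of `log`. When
`D(P_U‖P_M)` is finite it equals `-∫ log p_M`, so the penalty `-μ D(P_U‖P_M) = μ ∫ log p_M` is
strictly concave in the density: the Jensen gap `log ((1-t) p + t q) - (1-t) log p - t log q` is
nonnegative, and positive wherever `p ≠ q`, which happens on a set of positive measure. Two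
distinct maximizers would then both be beaten by their midpoint.
-/

open Real

section LogConcavity

variable {a b t : ℝ}

lemma log_convex_comb_ge (ha : 0 < a) (hb : 0 < b) (ht0 : 0 ≤ t) (ht1 : t ≤ 1) :
    (1 - t) * log a + t * log b ≤ log ((1 - t) * a + t * b) := by
  simpa only [smul_eq_mul] using
    strictConcaveOn_log_Ioi.concaveOn.2 ha hb (by linarith) ht0 (by ring)

lemma log_convex_comb_gt (ha : 0 < a) (hb : 0 < b) (hab : a ≠ b) (ht : t ∈ Ioo 0 1) :
    (1 - t) * log a + t * log b < log ((1 - t) * a + t * b) := by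
  simpa only [smul_eq_mul] using
    strictConcaveOn_log_Ioi.2 ha hb hab (by linarith [ht.2]) ht.1 (by ring)

lemma abs_log_convex_comb_le (ha : 0 < a) (hb : 0 < b) (ht0 : 0 ≤ t) (ht1 : t ≤ 1) :
    |log ((1 - t) * a + t * b)| ≤ |log a| + |log b| := by
  have hlow := log_convex_comb_ge ha hb ht0 ht1
  have hpos : 0 < (1 - t) * a + t * b := by
    rcases eq_or_lt_of_le ht0 with h | h
    · subst h; simpa using ha
    · positivity
  have hup : log ((1 - t) * a + t * b) ≤ log (max a b) :=
    log_le_log hpos (by nlinarith [le_max_left a b, le_max_right a b])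
  have hmax : log (max a b) ≤ |log a| + |log b| := by
    rcases max_choice a b with h | h <;> rw [h] <;>
      linarith [le_abs_self (log a), le_abs_self (log b), abs_nonneg (log a), abs_nonneg (log b)]
  rw [abs_le]
  constructor
  · nlinarith [neg_abs_le (log a), neg_abs_le (log b), abs_nonneg (log a), abs_nonneg (log b)]
  · linarith

lemma sum_mul_log_convex_comb_ge {ι : Type*} (s : Finset ι) {w x y : ι → ℝ}
    (hw : ∀ i ∈ s, 0 ≤ w i) (hx : ∀ i ∈ s, 0 < w i → 0 < x i)
    (hy : ∀ i ∈ s, 0 < w i → 0 < y i)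
    (ht0 : 0 ≤ t) (ht1 : t ≤ 1) :
    (1 - t) * ∑ i ∈ s, w i * log (x i) + t * ∑ i ∈ s, w i * log (y i)
      ≤ ∑ i ∈ s, w i * log ((1 - t) * x i + t * y i) := by
  rw [Finset.mul_sum, Finset.mul_sum, ← Finset.sum_add_distrib]
  refine Finset.sum_le_sum fun i hi => ?_
  rcases (hw i hi).lt_or_eq with hwi | hwi
  · nlinarith [log_convex_comb_ge (hx i hi hwi) (hy i hi hwi) ht0 ht1]
  · simp [← hwi]

end LogConcavity

section IntegralLogConcavity

variable {α : Type*} [MeasurableSpace α] {μ : Measure α} {f g : α → ℝ} {t : ℝ}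

lemma integrable_log_convex_comb (hfm : Measurable f) (hgm : Measurable g)
    (hf : ∀ᵐ x ∂μ, 0 < f x) (hg : ∀ᵐ x ∂μ, 0 < g x)
    (hfi : Integrable (fun x => log (f x)) μ) (hgi : Integrable (fun x => log (g x)) μ)
    (ht0 : 0 ≤ t) (ht1 : t ≤ 1) :
    Integrable (fun x => log ((1 - t) * f x + t * g x)) μ := by
  refine (hfi.abs.add hgi.abs).mono'
    ((hfm.const_mul _).add (hgm.const_mul _)).log.aestronglyMeasurable ?_
  filter_upwards [hf, hg] with x hfx hgx
  simpa only [norm_eq_abs, Pi.add_apply] using abs_log_convex_comb_le hfx hgx ht0 ht1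

lemma integral_log_convex_comb_gt (hfm : Measurable f) (hgm : Measurable g)
    (hf : ∀ᵐ x ∂μ, 0 < f x) (hg : ∀ᵐ x ∂μ, 0 < g x)
    (hfi : Integrable (fun x => log (f x)) μ) (hgi : Integrable (fun x => log (g x)) μ)
    (hfg : ¬ f =ᵐ[μ] g) (ht : t ∈ Ioo 0 1) :
    (1 - t) * ∫ x, log (f x) ∂μ + t * ∫ x, log (g x) ∂μ
      < ∫ x, log ((1 - t) * f x + t * g x) ∂μ := by
  set gap : α → ℝ :=
    fun x => log ((1 - t) * f x + t * g x) - ((1 - t) * log (f x) + t * log (g x))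
  have hmixi := integrable_log_convex_comb hfm hgm hf hg hfi hgi ht.1.le ht.2.le
  have hcombi : Integrable (fun x => (1 - t) * log (f x) + t * log (g x)) μ :=
    (hfi.const_mul _).add (hgi.const_mul _)
  have hgap_nonneg : 0 ≤ᵐ[μ] gap := by
    filter_upwards [hf, hg] with x hfx hgx
    exact sub_nonneg.2 (log_convex_comb_ge hfx hgx ht.1.le ht.2.le)
  have hgap_support : 0 < μ (Function.support gap) := by
    refine pos_iff_ne_zero.2 fun h => hfg ?_
    filter_upwards [(Measure.measure_support_eq_zero_iff μ).1 h, hf, hg] with x hx hfx hgx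
    by_contra hne
    exact (sub_pos.2 (log_convex_comb_gt hfx hgx hne ht)).ne' hx
  have hgap_pos : 0 < ∫ x, gap x ∂μ :=
    (integral_pos_iff_support_of_nonneg_ae hgap_nonneg (hmixi.sub hcombi)).2 hgap_support
  rw [integral_sub hmixi hcombi, integral_add (hfi.const_mul _) (hgi.const_mul _),
    integral_const_mul, integral_const_mul] at hgap_pos
  linarith

end IntegralLogConcavity

section RadonNikodym

variable {α : Type*} [MeasurableSpace α] {P Q ν : Measure α} {s t : ℝ}

lemma isProbabilityMeasure_mix [IsProbabilityMeasure P] [IsProbabilityMeasure Q]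
    (ht0 : 0 ≤ t) (ht1 : t ≤ 1) :
    IsProbabilityMeasure (ENNReal.ofReal (1 - t) • P + ENNReal.ofReal t • Q) := by
  constructor
  simp only [Measure.add_apply, Measure.smul_apply, smul_eq_mul, measure_univ, mul_one]
  rw [← ENNReal.ofReal_add (by linarith) ht0]
  norm_num

lemma absolutelyContinuous_mix_of_left (h : ν ≪ P) (hs : 0 < s) :
    ν ≪ ENNReal.ofReal s • P + ENNReal.ofReal t • Q :=
  (h.trans (Measure.absolutelyContinuous_smul (ENNReal.ofReal_pos.2 hs).ne')).add_right _

lemma integral_mix {f : α → ℝ} (hP : Integrable f P) (hQ : Integrable f Q)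
    (hs : 0 ≤ s) (ht : 0 ≤ t) :
    ∫ x, f x ∂(ENNReal.ofReal s • P + ENNReal.ofReal t • Q)
      = s * ∫ x, f x ∂P + t * ∫ x, f x ∂Q := by
  rw [integral_add_measure (hP.smul_measure ENNReal.ofReal_ne_top)
      (hQ.smul_measure ENNReal.ofReal_ne_top), integral_smul_measure, integral_smul_measure,
    ENNReal.toReal_ofReal hs, ENNReal.toReal_ofReal ht, smul_eq_mul, smul_eq_mul]

instance [IsFiniteMeasure P] : IsFiniteMeasure (ENNReal.ofReal s • P) :=
  P.smul_finite ENNReal.ofReal_ne_top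

lemma toReal_rnDeriv_mix [IsFiniteMeasure P] [IsFiniteMeasure Q] [SigmaFinite ν]
    (hs : 0 ≤ s) (ht : 0 ≤ t) :
    (fun x => ((ENNReal.ofReal s • P + ENNReal.ofReal t • Q).rnDeriv ν x).toReal)
      =ᵐ[ν] fun x => s * (P.rnDeriv ν x).toReal + t * (Q.rnDeriv ν x).toReal := by
  filter_upwards [Measure.rnDeriv_add (ENNReal.ofReal s • P) (ENNReal.ofReal t • Q) ν,
    Measure.rnDeriv_smul_left_of_ne_top P ν ENNReal.ofReal_ne_top,
    Measure.rnDeriv_smul_left_of_ne_top Q ν ENNReal.ofReal_ne_top,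
    Measure.rnDeriv_ne_top P ν, Measure.rnDeriv_ne_top Q ν] with x hadd hsP htQ hP hQ
  rw [hadd, Pi.add_apply, hsP, htQ, Pi.smul_apply, Pi.smul_apply, smul_eq_mul, smul_eq_mul,
    ENNReal.toReal_add (by finiteness) (by finiteness), ENNReal.toReal_mul, ENNReal.toReal_mul,
    ENNReal.toReal_ofReal hs, ENNReal.toReal_ofReal ht]

lemma toReal_rnDeriv_pos_ae [SigmaFinite P] [SigmaFinite ν] (h : ν ≪ P) :
    ∀ᵐ x ∂ν, 0 < (P.rnDeriv ν x).toReal := by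
  filter_upwards [Measure.rnDeriv_pos' h, Measure.rnDeriv_ne_top P ν] with x hpos htop
  exact ENNReal.toReal_pos hpos.ne' htop

lemma log_toReal_rnDeriv_ae_eq_neg [SigmaFinite P] [SigmaFinite ν] (h : ν ≪ P) :
    (fun x => log (ν.rnDeriv P x).toReal) =ᵐ[ν] fun x => -log (P.rnDeriv ν x).toReal := by
  filter_upwards [Measure.inv_rnDeriv h] with x hx
  rw [← hx, Pi.inv_apply, ENNReal.toReal_inv, log_inv, neg_neg]

lemma eq_of_rnDeriv_ae_eq [P.HaveLebesgueDecomposition ν] [Q.HaveLebesgueDecomposition ν]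
    (hP : P ≪ ν) (hQ : Q ≪ ν) (h : P.rnDeriv ν =ᵐ[ν] Q.rnDeriv ν) : P = Q := by
  rw [← Measure.withDensity_rnDeriv_eq P ν hP, ← Measure.withDensity_rnDeriv_eq Q ν hQ,
    withDensity_congr_ae h]

lemma integral_log_toReal_rnDeriv_convex_comb_gt {M : Measure α} [SigmaFinite P]
    [SigmaFinite Q] [SigmaFinite ν] (hP : ν ≪ P) (hQ : ν ≪ Q)
    (hPi : Integrable (fun x => log (P.rnDeriv ν x).toReal) ν)
    (hQi : Integrable (fun x => log (Q.rnDeriv ν x).toReal) ν)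
    (hPQ : ¬ P.rnDeriv ν =ᵐ[ν] Q.rnDeriv ν) (ht : t ∈ Ioo 0 1)
    (hM : (fun x => (M.rnDeriv ν x).toReal)
      =ᵐ[ν] fun x => (1 - t) * (P.rnDeriv ν x).toReal + t * (Q.rnDeriv ν x).toReal) :
    Integrable (fun x => log (M.rnDeriv ν x).toReal) ν ∧
    (1 - t) * ∫ x, log (P.rnDeriv ν x).toReal ∂ν + t * ∫ x, log (Q.rnDeriv ν x).toReal ∂ν
      < ∫ x, log (M.rnDeriv ν x).toReal ∂ν := by
  have hlog_mix : (fun x => log (M.rnDeriv ν x).toReal)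
      =ᵐ[ν] fun x => log ((1 - t) * (P.rnDeriv ν x).toReal + t * (Q.rnDeriv ν x).toReal) :=
    hM.fun_comp log
  have hPQ' : ¬ (fun x => (P.rnDeriv ν x).toReal) =ᵐ[ν] fun x => (Q.rnDeriv ν x).toReal :=
    fun h => hPQ <| by
      filter_upwards [h, Measure.rnDeriv_ne_top P ν, Measure.rnDeriv_ne_top Q ν]
        with x hx hPx hQx using (ENNReal.toReal_eq_toReal_iff' hPx hQx).1 hx
  have hPm := (Measure.measurable_rnDeriv P ν).ennreal_toReal
  have hQm := (Measure.measurable_rnDeriv Q ν).ennreal_toReal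
  rw [integral_congr_ae hlog_mix]
  have hPpos := toReal_rnDeriv_pos_ae hP
  have hQpos := toReal_rnDeriv_pos_ae hQ
  exact ⟨(integrable_log_convex_comb hPm hQm hPpos hQpos hPi hQi ht.1.le ht.2.le).congr
      hlog_mix.symm, integral_log_convex_comb_gt hPm hQm hPpos hQpos hPi hQi hPQ' ht⟩

end RadonNikodym

lemma EReal.one_sub_mul_add_mul_self {t : ℝ} (ht : t ∈ Ioo 0 1) (x : EReal) :
    ((1 - t : ℝ) : EReal) * x + (t : EReal) * x = x := by
  have h1t : 0 < 1 - t := by linarith [ht.2]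
  induction x using EReal.rec with
  | bot => rw [EReal.coe_mul_bot_of_pos h1t, EReal.coe_mul_bot_of_pos ht.1, EReal.bot_add]
  | top => rw [EReal.coe_mul_top_of_pos h1t, EReal.coe_mul_top_of_pos ht.1, EReal.top_add_top]
  | coe x => norm_cast; ring

lemma KLdiv_eq_neg_integral_log_rnDeriv {ν ρ : Measure ℝ} [SigmaFinite ν] [SigmaFinite ρ]
    (hac : ν ≪ ρ) (hint : Integrable (fun x => log (ρ.rnDeriv ν x).toReal) ν) :
    KLdiv ν ρ = ((-∫ x, log (ρ.rnDeriv ν x).toReal ∂ν : ℝ) : EReal) := by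
  rw [KLdiv, if_pos ⟨hac, hint.neg.congr (log_toReal_rnDeriv_ae_eq_neg hac).symm⟩,
    integral_congr_ae (log_toReal_rnDeriv_ae_eq_neg hac), integral_neg]

lemma KLdiv_ne_top_iff {ν ρ : Measure ℝ} [SigmaFinite ν] [SigmaFinite ρ] :
    KLdiv ν ρ ≠ ⊤ ↔
      ν ≪ ρ ∧ Integrable (fun x => log (ρ.rnDeriv ν x).toReal) ν := by
  refine ⟨fun h => ?_, fun ⟨hac, hint⟩ => ?_⟩
  · rw [KLdiv] at h
    split_ifs at h with hc
    · exact ⟨hc.1, (hc.2.congr (log_toReal_rnDeriv_ae_eq_neg hc.1)).neg.congr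
        (.of_forall fun x => neg_neg _)⟩
    · exact absurd rfl h
  · rw [KLdiv_eq_neg_integral_log_rnDeriv hac hint]
    exact EReal.coe_ne_top _

instance : IsProbabilityMeasure lebI := ⟨by simp [lebI, Real.volume_Icc]⟩

section Likelihood

variable {N : ℕ} {pA : ℕ → ℝ → ℝ} {phat : ℕ → ℝ} {μ : ℝ} {P Q : Measure ℝ}

lemma margin_mix (hpAmeas : ∀ y, Measurable (pA y)) (hpAnonneg : ∀ y γ, 0 ≤ pA y γ)
    (hpAsum : ∀ γ ∈ Icc (0:ℝ) 1, ∑ y ∈ Finset.range (N + 1), pA y γ = 1)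
    [IsFiniteMeasure P] [IsFiniteMeasure Q] (hPac : P ≪ lebI) (hQac : Q ≪ lebI)
    {s t : ℝ} (hs : 0 ≤ s) (ht : 0 ≤ t) {y : ℕ} (hy : y ∈ Finset.range (N + 1)) :
    margin pA (ENNReal.ofReal s • P + ENNReal.ofReal t • Q) y
      = s * margin pA P y + t * margin pA Q y := by
  have hIcc : ∀ {R : Measure ℝ}, R ≪ lebI → Icc (0:ℝ) 1 ∈ ae R := fun hR =>
    hR (by simp [lebI, Measure.restrict_apply measurableSet_Icc.compl])
  have hpA_le_one : ∀ γ ∈ Icc (0:ℝ) 1, ‖pA y γ‖ ≤ 1 := fun γ hγ => by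
    rw [norm_of_nonneg (hpAnonneg y γ), ← hpAsum γ hγ]
    exact Finset.single_le_sum (fun z _ => hpAnonneg z γ) hy
  have hint : ∀ {R : Measure ℝ} [IsFiniteMeasure R], R ≪ lebI → Integrable (pA y) R :=
    fun hR => (integrable_const (1:ℝ)).mono' (hpAmeas y).aestronglyMeasurable
      (by filter_upwards [hIcc hR] using hpA_le_one)
  exact integral_mix (hint hPac) (hint hQac) hs ht

lemma regLoglik_eq_coe
    (hcond : ∀ y ∈ Finset.range (N + 1), 0 < phat y → 0 < margin pA P y)
    [SigmaFinite P] (hac : lebI ≪ P)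
    (hint : Integrable (fun x => log (P.rnDeriv lebI x).toReal) lebI) :
    regLoglik N pA phat μ P
      = ((∑ y ∈ Finset.range (N + 1), phat y * log (margin pA P y)
          + μ * ∫ x, log (P.rnDeriv lebI x).toReal ∂lebI : ℝ) : EReal) := by
  rw [regLoglik, loglik, if_pos hcond, KLdiv_eq_neg_integral_log_rnDeriv hac hint,
    ← EReal.coe_mul, ← EReal.coe_sub, mul_neg, sub_neg_eq_add]

lemma margin_pos_and_integrable_of_bot_lt_regLoglik (hμ : 0 < μ) [SigmaFinite P]
    (h : ⊥ < regLoglik N pA phat μ P) :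
    (∀ y ∈ Finset.range (N + 1), 0 < phat y → 0 < margin pA P y) ∧ lebI ≪ P ∧
      Integrable (fun x => log (P.rnDeriv lebI x).toReal) lebI := by
  rw [regLoglik] at h
  have hl : loglik N pA phat P ≠ ⊥ := fun hb => by simp [hb] at h
  have hk : KLdiv lebI P ≠ ⊤ := fun ht => by
    rw [ht, EReal.coe_mul_top_of_pos hμ, EReal.sub_top] at h; exact lt_irrefl _ h
  refine ⟨?_, KLdiv_ne_top_iff.1 hk⟩
  by_contra hc
  rw [loglik, if_neg hc] at hl
  exact hl rfl

lemma regLoglik_mix_gt (hpAmeas : ∀ y, Measurable (pA y)) (hpAnonneg : ∀ y γ, 0 ≤ pA y γ)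
    (hpAsum : ∀ γ ∈ Icc (0:ℝ) 1, ∑ y ∈ Finset.range (N + 1), pA y γ = 1)
    (hphat : ∀ y, 0 ≤ phat y) (hμ : 0 < μ) [IsFiniteMeasure P] [IsFiniteMeasure Q]
    (hPac : P ≪ lebI) (hQac : Q ≪ lebI)
    (hdiff : ¬ P.rnDeriv lebI =ᵐ[lebI] Q.rnDeriv lebI)
    (hPfin : ⊥ < regLoglik N pA phat μ P) (hQfin : ⊥ < regLoglik N pA phat μ Q)
    {t : ℝ} (ht : t ∈ Ioo 0 1) :
    ((1 - t : ℝ) : EReal) * regLoglik N pA phat μ P + (t : EReal) * regLoglik N pA phat μ Q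
      < regLoglik N pA phat μ (ENNReal.ofReal (1 - t) • P + ENNReal.ofReal t • Q) := by
  obtain ⟨hcondP, hPl, hPint⟩ := margin_pos_and_integrable_of_bot_lt_regLoglik hμ hPfin
  obtain ⟨hcondQ, hQl, hQint⟩ := margin_pos_and_integrable_of_bot_lt_regLoglik hμ hQfin
  have h1t : 0 < 1 - t := by linarith [ht.2]
  set M := ENNReal.ofReal (1 - t) • P + ENNReal.ofReal t • Q
  have hmargin : ∀ y ∈ Finset.range (N + 1),
      margin pA M y = (1 - t) * margin pA P y + t * margin pA Q y := fun y hy =>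
    margin_mix hpAmeas hpAnonneg hpAsum hPac hQac h1t.le ht.1.le hy
  have hcondM : ∀ y ∈ Finset.range (N + 1), 0 < phat y → 0 < margin pA M y := by
    intro y hy hp
    rw [hmargin y hy]
    exact add_pos_of_pos_of_nonneg (mul_pos h1t (hcondP y hy hp))
      (mul_nonneg ht.1.le (integral_nonneg (hpAnonneg y)))
  have hsum : (1 - t) * ∑ y ∈ Finset.range (N + 1), phat y * log (margin pA P y)
        + t * ∑ y ∈ Finset.range (N + 1), phat y * log (margin pA Q y)
      ≤ ∑ y ∈ Finset.range (N + 1), phat y * log (margin pA M y) := by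
    refine (sum_mul_log_convex_comb_ge _ (fun y _ => hphat y) hcondP hcondQ ht.1.le
      ht.2.le).trans_eq (Finset.sum_congr rfl fun y hy => ?_)
    rw [hmargin y hy]
  obtain ⟨hMint, hlog⟩ :=
    integral_log_toReal_rnDeriv_convex_comb_gt hPl hQl hPint hQint hdiff ht
    (toReal_rnDeriv_mix h1t.le ht.1.le)
  rw [regLoglik_eq_coe hcondP hPl hPint, regLoglik_eq_coe hcondQ hQl hQint,
    regLoglik_eq_coe hcondM (absolutelyContinuous_mix_of_left hPl h1t) hMint,
    ← EReal.coe_mul, ← EReal.coe_mul, ← EReal.coe_add, EReal.coe_lt_coe_iff]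
  nlinarith [mul_lt_mul_of_pos_left hlog hμ]

end Likelihood

theorem regLoglik_strictly_concave_and_unique_maximizer_general
    (N : ℕ) (pA : ℕ → ℝ → ℝ) (phat : ℕ → ℝ)
    (hpAmeas : ∀ y, Measurable (pA y)) (hpAnonneg : ∀ y γ, 0 ≤ pA y γ)
    (hpAsum : ∀ γ ∈ Set.Icc (0:ℝ) 1, ∑ y ∈ Finset.range (N + 1), pA y γ = 1)
    (hphat : ∀ y, 0 ≤ phat y)
    (μ : ℝ) (hμ : 0 < μ)
    (P Q : Measure ℝ) (hP : IsProbabilityMeasure P) (hQ : IsProbabilityMeasure Q)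
    (hPac : P ≪ lebI) (hQac : Q ≪ lebI)
    (hdiff : ¬ (P.rnDeriv lebI =ᵐ[lebI] Q.rnDeriv lebI))
    (hPfin : ⊥ < regLoglik N pA phat μ P) (hQfin : ⊥ < regLoglik N pA phat μ Q) :
    (∀ t ∈ Set.Ioo (0:ℝ) 1,
      ((1 - t : ℝ) : EReal) * regLoglik N pA phat μ P
          + ((t : ℝ) : EReal) * regLoglik N pA phat μ Q
        < regLoglik N pA phat μ (ENNReal.ofReal (1 - t) • P + ENNReal.ofReal t • Q)) ∧
    (∀ P' Q' : Measure ℝ, IsProbabilityMeasure P' → IsProbabilityMeasure Q' →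
      P' ≪ lebI → Q' ≪ lebI →
      (∀ R : Measure ℝ, IsProbabilityMeasure R → R ≪ lebI →
        regLoglik N pA phat μ R ≤ regLoglik N pA phat μ P') →
      (∀ R : Measure ℝ, IsProbabilityMeasure R → R ≪ lebI →
        regLoglik N pA phat μ R ≤ regLoglik N pA phat μ Q') →
      P' = Q') := by
  refine ⟨fun t ht => regLoglik_mix_gt hpAmeas hpAnonneg hpAsum hphat hμ hPac hQac hdiff
    hPfin hQfin ht, fun P' Q' hP' hQ' hP'ac hQ'ac hP'max hQ'max => ?_⟩
  by_contra hne
  have hhalf : (1 / 2 : ℝ) ∈ Ioo 0 1 := by norm_num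
  have hmid := regLoglik_mix_gt hpAmeas hpAnonneg hpAsum hphat hμ hP'ac hQ'ac
    (fun h => hne (eq_of_rnDeriv_ae_eq hP'ac hQ'ac h))
    (hPfin.trans_le (hP'max P hP hPac)) (hPfin.trans_le (hQ'max P hP hPac)) hhalf
  have hmid_le := hP'max _ (isProbabilityMeasure_mix hhalf.1.le hhalf.2.le)
    ((hP'ac.smul_left _).add_left (hQ'ac.smul_left _))
  rw [le_antisymm (hP'max Q' hQ' hQ'ac) (hQ'max P' hP' hP'ac),
    EReal.one_sub_mul_add_mul_self hhalf] at hmid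
  exact (hmid.trans_le hmid_le).false

/-- **Theorem (strict concavity of `ℓ_μ` and uniqueness of its maximizer).**
Fix `μ > 0`.  If `P` and `Q` are probability measures on `[0,1]` that are absolutely
continuous with respect to Lebesgue measure, whose densities differ on a set of positive
Lebesgue measure, and such that `ℓ_μ[P] > −∞` and `ℓ_μ[Q] > −∞`, then for every
`t ∈ (0,1)`, `ℓ_μ[(1−t)P + tQ] > (1−t)·ℓ_μ[P] + t·ℓ_μ[Q]`.  Consequently, `ℓ_μ` has at
most one maximizer among absolutely continuous probability measures on `[0,1]`. -/
theorem regLoglik_strictly_concave_and_unique_maximizer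
    (N : ℕ) (pA : ℕ → ℝ → ℝ) (phat : ℕ → ℝ)
    (hpAmeas : ∀ y, Measurable (pA y)) (hpAnonneg : ∀ y γ, 0 ≤ pA y γ)
    (hpAsum : ∀ γ ∈ Set.Icc (0:ℝ) 1, ∑ y ∈ Finset.range (N + 1), pA y γ = 1)
    (hphat : ∀ y, 0 ≤ phat y) (hphat1 : ∑ y ∈ Finset.range (N + 1), phat y = 1)
    (μ : ℝ) (hμ : 0 < μ)
    (P Q : Measure ℝ) (hP : IsProbabilityMeasure P) (hQ : IsProbabilityMeasure Q)
    (hPac : P ≪ lebI) (hQac : Q ≪ lebI)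
    (hdiff : ¬ (P.rnDeriv lebI =ᵐ[lebI] Q.rnDeriv lebI))
    (hPfin : ⊥ < regLoglik N pA phat μ P) (hQfin : ⊥ < regLoglik N pA phat μ Q) :
    (∀ t ∈ Set.Ioo (0:ℝ) 1,
      ((1 - t : ℝ) : EReal) * regLoglik N pA phat μ P
          + ((t : ℝ) : EReal) * regLoglik N pA phat μ Q
        < regLoglik N pA phat μ (ENNReal.ofReal (1 - t) • P + ENNReal.ofReal t • Q)) ∧
    (∀ P' Q' : Measure ℝ, IsProbabilityMeasure P' → IsProbabilityMeasure Q' →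
      P' ≪ lebI → Q' ≪ lebI →
      (∀ R : Measure ℝ, IsProbabilityMeasure R → R ≪ lebI →
        regLoglik N pA phat μ R ≤ regLoglik N pA phat μ P') →
      (∀ R : Measure ℝ, IsProbabilityMeasure R → R ≪ lebI →
        regLoglik N pA phat μ R ≤ regLoglik N pA phat μ Q') →
      P' = Q') :=
  regLoglik_strictly_concave_and_unique_maximizer_general N pA phat hpAmeas hpAnonneg hpAsum hphat μ
    hμ P Q hP hQ hPac hQac hdiff hPfin hQfin
end

section
/- Assume c₀ := min_{0≤y≤N} p̂(y) > 0. Fix ρ ∈ [0,1), ε ∈ (0, ρ/16], δ > 0, and a measurable set B ⊆ [0,1] whose complement has Lebesgue measure at most δ. Let p^(0) be a probability density on [0,1] with p̄ := sup_{γ∈[0,1]} p^(0)(γ) < ∞, let (p^(t))_{t≥0} be the sequence of unregularized NPEM updates started from p^(0), and let p^(t)_MA be the corresponding marginals. Set η₁ := max_{y≠y′} sup_{γ∈B} p_A(y|γ)·p_A(y′|γ) and η₂ := max_y sup_{γ∈B} ∑_{y′≠y} p_A(y|γ)·p_A(y′|γ). Assume: (L1) ‖p^(0)_MA − p̂‖₁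 ≤ ε·c₀; (L2) η₁ ≤ ρ·c₀/(4(N+1)); (L3) η₂ ≤ ρ·c₀/4; (L6) 0 < δ ≤ ρ·c₀/(4·p̄·exp((ρ/(1−ρ))·(1/c₀)·‖p^(0)_MA − p̂‖₁)·(N+2)). Then for every t ≥ 0, ‖p^(t+1)_MA − p̂‖₁ ≤ ρ·‖p^(t)_MA − p̂‖₁, where ‖g‖₁ = ∑_{y=0}^N |g(y)|. -/
/-!
Write `r(y) = p̂(y) / p_MA(y)` and `I(y, y') = ∫ p_A(y|γ) p_A(y'|γ) p(γ) dγ`. Since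
`∑_{y'} I(y, y') = p_MA(y)`, one EM update gives
`p′_MA(y) − p̂(y) = ∑_{y' ≠ y} (r(y') − r(y)) I(y, y')`.
Off the diagonal `I(y, y') ≤ η₁ + ‖p‖_∞ |[0,1] \ B| / 4`, splitting the integral over `B` and its
complement (where `p_A(y|γ) p_A(y'|γ) ≤ 1/4`), and `∑_y |r(y) − 1| ≤ 16/(15 c₀) ‖p_MA − p̂‖₁` as
long as `‖p_MA − p̂‖₁ ≤ c₀/16`; with (L2) and (L6) this contracts the error by `14ρ/15`.
The same ratio bound shows that an update multiplies `p` pointwise by at most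
`exp (16/(15 c₀) ‖p_MA − p̂‖₁)`. Along geometrically decaying errors these factors multiply to less
than `e < 3`, so `p⁽ᵗ⁾ ≤ 3 p̄` for all `t`, which is what (L6) needs at every step.
-/

open MeasureTheory Set Filter Topology

/-- Implied marginal `p_MA(y) = ∫₀¹ p_A(y|γ) p_M(γ) dγ` of a density `p_M`. -/
noncomputable def marginD (pA : ℕ → ℝ → ℝ) (p : ℝ → ℝ) (y : ℕ) : ℝ :=
  ∫ γ, pA y γ * p γ ∂lebI

/-- The unregularized NPEM update `p′_M(γ) = ∑_y p_A(y|γ) p̂(y) p_M(γ)/p_MA(y)`. -/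
noncomputable def npUpd0 (N : ℕ) (pA : ℕ → ℝ → ℝ) (phat : ℕ → ℝ) (p : ℝ → ℝ) :
    ℝ → ℝ := fun γ =>
  ∑ y ∈ Finset.range (N + 1), pA y γ * phat y * p γ / marginD pA p y

open Finset

instance inst_s6 : IsProbabilityMeasure lebI :=
  ⟨by rw [lebI, Measure.restrict_apply_univ, Real.volume_Icc]; norm_num⟩

lemma ae_lebI_of_forall_Icc {P : ℝ → Prop} (h : ∀ γ ∈ Icc (0:ℝ) 1, P γ) : ∀ᵐ γ ∂lebI, P γ :=
  (ae_restrict_iff' measurableSet_Icc).2 (ae_of_all _ h)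

-- Bochner integrals of non-integrable functions are `0`, so `∫ p = 1` forces integrability.
lemma IsDensity.integrable {p : ℝ → ℝ} (hp : IsDensity p) : Integrable p lebI :=
  Integrable.of_integral_ne_zero (by rw [hp.2.2]; exact one_ne_zero)

lemma IsDensity.one_le_of_le {p : ℝ → ℝ} (hp : IsDensity p) {C : ℝ}
    (hC : ∀ γ ∈ Icc (0:ℝ) 1, p γ ≤ C) : 1 ≤ C := by
  have h := integral_mono_ae hp.integrable (integrable_const C) (ae_lebI_of_forall_Icc hC)
  rwa [hp.2.2, integral_const, probReal_univ, one_smul] at h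

structure IsMeasurementKernel (N : ℕ) (pA : ℕ → ℝ → ℝ) : Prop where
  measurable : ∀ y, Measurable (pA y)
  nonneg : ∀ y γ, 0 ≤ pA y γ
  sum_eq_one : ∀ γ ∈ Icc (0:ℝ) 1, ∑ y ∈ range (N + 1), pA y γ = 1

namespace IsMeasurementKernel

variable {N : ℕ} {pA : ℕ → ℝ → ℝ} {y y' : ℕ} {γ : ℝ}

lemma le_one (hK : IsMeasurementKernel N pA) (hy : y ∈ range (N + 1)) (hγ : γ ∈ Icc (0:ℝ) 1) :
    pA y γ ≤ 1 :=
  (single_le_sum (fun i _ => hK.nonneg i γ) hy).trans_eq (hK.sum_eq_one γ hγ)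

lemma mul_le_quarter (hK : IsMeasurementKernel N pA) (hy : y ∈ range (N + 1))
    (hy' : y' ∈ range (N + 1)) (hne : y ≠ y') (hγ : γ ∈ Icc (0:ℝ) 1) :
    pA y γ * pA y' γ ≤ 1 / 4 := by
  have hpair : pA y γ + pA y' γ ≤ 1 := by
    rw [← hK.sum_eq_one γ hγ, ← add_sum_erase _ _ hy]
    gcongr
    exact single_le_sum (fun i _ => hK.nonneg i γ) (mem_erase.2 ⟨hne.symm, hy'⟩)
  nlinarith [sq_nonneg (pA y γ - pA y' γ), hK.nonneg y γ, hK.nonneg y' γ]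

lemma integrable_mul (hK : IsMeasurementKernel N pA) (hy : y ∈ range (N + 1)) {q : ℝ → ℝ}
    (hq : Integrable q lebI) : Integrable (fun γ => pA y γ * q γ) lebI :=
  hq.bdd_mul (hK.measurable y).aestronglyMeasurable <| ae_lebI_of_forall_Icc fun γ hγ => by
    rw [Real.norm_of_nonneg (hK.nonneg y γ)]; exact hK.le_one hy hγ

lemma integrable_mul_mul (hK : IsMeasurementKernel N pA) (hy : y ∈ range (N + 1))
    (hy' : y' ∈ range (N + 1)) {q : ℝ → ℝ} (hq : Integrable q lebI) :
    Integrable (fun γ => pA y γ * (pA y' γ * q γ)) lebI :=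
  hK.integrable_mul hy (hK.integrable_mul hy' hq)

end IsMeasurementKernel

noncomputable def marginErr (N : ℕ) (pA : ℕ → ℝ → ℝ) (phat : ℕ → ℝ) (p : ℝ → ℝ) : ℝ :=
  ∑ y ∈ range (N + 1), |marginD pA p y - phat y|

noncomputable def ratioDev (N : ℕ) (pA : ℕ → ℝ → ℝ) (phat : ℕ → ℝ) (p : ℝ → ℝ) : ℝ :=
  ∑ y ∈ range (N + 1), |phat y / marginD pA p y - 1|

noncomputable def pairInt (pA : ℕ → ℝ → ℝ) (p : ℝ → ℝ) (y y' : ℕ) : ℝ :=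
  ∫ γ, pA y γ * (pA y' γ * p γ) ∂lebI

lemma marginErr_nonneg (N : ℕ) (pA : ℕ → ℝ → ℝ) (phat : ℕ → ℝ) (p : ℝ → ℝ) :
    0 ≤ marginErr N pA phat p :=
  sum_nonneg fun _ _ => abs_nonneg _

lemma sum_sum_erase_add {ι R : Type*} [DecidableEq ι] [CommRing R] (s : Finset ι) (g : ι → R) :
    ∑ i ∈ s, ∑ j ∈ s.erase i, (g j + g i) = 2 * (#s - 1) * ∑ i ∈ s, g i := by
  have hrow : ∀ i ∈ s, ∑ j ∈ s.erase i, (g j + g i) = ∑ j ∈ s, g j + #s * g i - 2 * g i :=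
    fun i hi => by rw [sum_erase_eq_sub hi, sum_add_distrib, sum_const, nsmul_eq_mul]; ring
  rw [sum_congr rfl hrow, sum_sub_distrib, sum_add_distrib, sum_const, nsmul_eq_mul,
    ← mul_sum, ← mul_sum]
  ring

section Update

variable {N : ℕ} {pA : ℕ → ℝ → ℝ} {phat : ℕ → ℝ} {q : ℝ → ℝ} {y y' : ℕ}

lemma pairInt_nonneg (hK : IsMeasurementKernel N pA) (hq : ∀ γ, 0 ≤ q γ) :
    0 ≤ pairInt pA q y y' :=
  integral_nonneg fun γ => mul_nonneg (hK.nonneg y γ) (mul_nonneg (hK.nonneg y' γ) (hq γ))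

lemma sum_pairInt (hK : IsMeasurementKernel N pA) (hq : Integrable q lebI)
    (hy : y ∈ range (N + 1)) :
    ∑ y' ∈ range (N + 1), pairInt pA q y y' = marginD pA q y := by
  simp only [pairInt]
  rw [← integral_finsetSum _ fun y' hy' => hK.integrable_mul_mul hy hy' hq]
  refine integral_congr_ae (ae_lebI_of_forall_Icc fun γ hγ => ?_)
  simp only [← mul_sum, ← sum_mul, hK.sum_eq_one γ hγ, one_mul]

lemma marginD_npUpd0 (hK : IsMeasurementKernel N pA) (hq : Integrable q lebI)
    (hy : y ∈ range (N + 1)) :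
    marginD pA (npUpd0 N pA phat q) y =
      ∑ y' ∈ range (N + 1), phat y' / marginD pA q y' * pairInt pA q y y' := by
  simp only [pairInt, ← integral_const_mul]
  rw [← integral_finsetSum _ fun y' hy' => (hK.integrable_mul_mul hy hy' hq).const_mul _]
  refine integral_congr_ae (ae_of_all _ fun γ => ?_)
  simp only [npUpd0, mul_sum]
  exact sum_congr rfl fun _ _ => by ring

lemma marginD_npUpd0_sub (hK : IsMeasurementKernel N pA) (hq : Integrable q lebI)
    (hy : y ∈ range (N + 1)) (hMy : marginD pA q y ≠ 0) :
    marginD pA (npUpd0 N pA phat q) y - phat y =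
      ∑ y' ∈ (range (N + 1)).erase y,
        (phat y' / marginD pA q y' - phat y / marginD pA q y) * pairInt pA q y y' := by
  have hphat : phat y = ∑ y' ∈ range (N + 1), phat y / marginD pA q y * pairInt pA q y y' := by
    rw [← mul_sum, sum_pairInt hK hq hy, div_mul_cancel₀ _ hMy]
  rw [marginD_npUpd0 hK hq hy]
  conv_lhs => rw [hphat, ← sum_sub_distrib, ← add_sum_erase _ _ hy]
  simp only [← sub_mul, sub_self, zero_add]

lemma isDensity_npUpd0 (hK : IsMeasurementKernel N pA)
    (hphat1 : ∑ y ∈ range (N + 1), phat y = 1) (hphat : ∀ y ∈ range (N + 1), 0 ≤ phat y)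
    (hM : ∀ y ∈ range (N + 1), 0 < marginD pA q y) (hq : IsDensity q) :
    IsDensity (npUpd0 N pA phat q) := by
  have hqI := hq.integrable
  obtain ⟨hqm, hqnn, -⟩ := hq
  refine ⟨Finset.measurable_sum _ fun y _ =>
    (((hK.measurable y).mul_const _).mul hqm).div_const _, fun γ => sum_nonneg fun y hy => ?_, ?_⟩
  · exact div_nonneg (mul_nonneg (mul_nonneg (hK.nonneg y γ) (hphat y hy)) (hqnn γ)) (hM y hy).le
  · have hupd : npUpd0 N pA phat q =
        fun γ => ∑ y ∈ range (N + 1), phat y / marginD pA q y * (pA y γ * q γ) := by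
      funext γ
      exact sum_congr rfl fun _ _ => by ring
    rw [hupd, integral_finsetSum _ fun y hy => (hK.integrable_mul hy hqI).const_mul _, ← hphat1]
    refine sum_congr rfl fun y hy => ?_
    rw [integral_const_mul, ← marginD, div_mul_cancel₀ _ (hM y hy).ne']

lemma pairInt_le (hK : IsMeasurementKernel N pA) (hy : y ∈ range (N + 1))
    (hy' : y' ∈ range (N + 1)) (hne : y ≠ y') {B : Set ℝ} (hBmeas : MeasurableSet B) {η : ℝ}
    (hη0 : 0 ≤ η) (hη : ∀ γ ∈ B, pA y γ * pA y' γ ≤ η)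
    (hq : IsDensity q) {Q : ℝ} (hQ : ∀ γ ∈ Icc (0:ℝ) 1, q γ ≤ Q) :
    pairInt pA q y y' ≤ η + Q / 4 * (volume (Icc (0:ℝ) 1 \ B)).toReal := by
  have hqI := hq.integrable
  have hqnn := hq.2.1
  rw [pairInt, ← integral_add_compl hBmeas (hK.integrable_mul_mul hy hy' hqI)]
  gcongr
  · calc ∫ γ in B, pA y γ * (pA y' γ * q γ) ∂lebI
        ≤ ∫ γ in B, η * q γ ∂lebI := by
          refine setIntegral_mono_on (hK.integrable_mul_mul hy hy' hqI).integrableOn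
            (hqI.const_mul η).integrableOn hBmeas fun γ hγ => ?_
          rw [← mul_assoc]; exact mul_le_mul_of_nonneg_right (hη γ hγ) (hqnn γ)
      _ = η * ∫ γ in B, q γ ∂lebI := integral_const_mul _ _
      _ ≤ η * ∫ γ, q γ ∂lebI :=
          mul_le_mul_of_nonneg_left (setIntegral_le_integral hqI (ae_of_all _ hqnn)) hη0
      _ = η := by rw [hq.2.2, mul_one]
  · have hres : lebI.restrict Bᶜ = volume.restrict (Icc (0:ℝ) 1 \ B) := by
      rw [lebI, Measure.restrict_restrict hBmeas.compl, sdiff_eq, inter_comm]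
    rw [hres]
    refine (le_abs_self _).trans ((Real.norm_eq_abs _).symm.trans_le
      (norm_setIntegral_le_of_norm_le_const
        ((measure_mono sdiff_subset).trans_lt measure_Icc_lt_top) fun γ hγ => ?_))
    rw [Real.norm_of_nonneg (mul_nonneg (hK.nonneg y γ) (mul_nonneg (hK.nonneg y' γ) (hqnn γ))),
      ← mul_assoc, div_eq_mul_one_div, mul_comm Q]
    exact mul_le_mul (hK.mul_le_quarter hy hy' hne hγ.1) (hQ γ hγ.1) (hqnn γ) (by norm_num)

lemma npUpd0_le_mul_one_add_ratioDev (hK : IsMeasurementKernel N pA) (hqnn : ∀ γ, 0 ≤ q γ)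
    {γ : ℝ} (hγ : γ ∈ Icc (0:ℝ) 1) :
    npUpd0 N pA phat q γ ≤ q γ * (1 + ratioDev N pA phat q) := by
  have hterm : ∀ y ∈ range (N + 1), pA y γ * phat y * q γ / marginD pA q y ≤
      pA y γ * q γ + q γ * |phat y / marginD pA q y - 1| := fun y hy => by
    have hpq : pA y γ * q γ ≤ q γ := mul_le_of_le_one_left (hqnn γ) (hK.le_one hy hγ)
    have hr := le_abs_self (phat y / marginD pA q y - 1)
    calc pA y γ * phat y * q γ / marginD pA q y
        = pA y γ * q γ + pA y γ * q γ * (phat y / marginD pA q y - 1) := by ring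
      _ ≤ pA y γ * q γ + q γ * |phat y / marginD pA q y - 1| :=
          add_le_add_right ((mul_le_mul_of_nonneg_left hr
            (mul_nonneg (hK.nonneg y γ) (hqnn γ))).trans
            (mul_le_mul_of_nonneg_right hpq (abs_nonneg _))) _
  calc npUpd0 N pA phat q γ
      ≤ ∑ y ∈ range (N + 1), (pA y γ * q γ + q γ * |phat y / marginD pA q y - 1|) :=
        sum_le_sum hterm
    _ = q γ * (1 + ratioDev N pA phat q) := by
        rw [sum_add_distrib, ← sum_mul, hK.sum_eq_one γ hγ, ← mul_sum, ratioDev]; ring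

lemma marginErr_npUpd0_le (hK : IsMeasurementKernel N pA) (hq : IsDensity q)
    (hM : ∀ y ∈ range (N + 1), 0 < marginD pA q y) {W : ℝ}
    (hW : ∀ y ∈ range (N + 1), ∀ y' ∈ range (N + 1), y ≠ y' → pairInt pA q y y' ≤ W) :
    marginErr N pA phat (npUpd0 N pA phat q) ≤ 2 * N * W * ratioDev N pA phat q := by
  set g : ℕ → ℝ := fun y => |phat y / marginD pA q y - 1|
  have hrow : ∀ y ∈ range (N + 1), |marginD pA (npUpd0 N pA phat q) y - phat y| ≤
      ∑ y' ∈ (range (N + 1)).erase y, (g y' + g y) * W := fun y hy => by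
    rw [marginD_npUpd0_sub hK hq.integrable hy (hM y hy).ne']
    refine (abs_sum_le_sum_abs _ _).trans (sum_le_sum fun y' hy' => ?_)
    obtain ⟨hne, hy'⟩ := mem_erase.1 hy'
    have hI := pairInt_nonneg (y := y) (y' := y') hK hq.2.1
    rw [abs_mul, abs_of_nonneg hI]
    refine mul_le_mul ?_ (hW y hy y' hy' hne.symm) hI (by positivity)
    exact (abs_sub_le _ 1 _).trans_eq (by rw [abs_sub_comm 1])
  calc marginErr N pA phat (npUpd0 N pA phat q)
      ≤ ∑ y ∈ range (N + 1), ∑ y' ∈ (range (N + 1)).erase y, (g y' + g y) * W :=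
        sum_le_sum hrow
    _ = 2 * N * W * ratioDev N pA phat q := by
        simp only [← sum_mul, sum_sum_erase_add, card_range, ratioDev, g]
        push_cast; ring

end Update

section Ratio

variable {N : ℕ} {pA : ℕ → ℝ → ℝ} {phat : ℕ → ℝ} {q : ℝ → ℝ} {c0 : ℝ}

lemma marginD_ge_of_marginErr_le (hc0 : ∀ y ∈ range (N + 1), c0 ≤ phat y)
    (herr : marginErr N pA phat q ≤ c0 / 16) {y : ℕ} (hy : y ∈ range (N + 1)) :
    15 / 16 * c0 ≤ marginD pA q y := by
  have h := (single_le_sum (f := fun y => |marginD pA q y - phat y|)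
    (fun _ _ => abs_nonneg _) hy).trans herr
  linarith [neg_abs_le (marginD pA q y - phat y), hc0 y hy]

lemma ratioDev_le (hc0pos : 0 < c0) (hc0 : ∀ y ∈ range (N + 1), c0 ≤ phat y)
    (herr : marginErr N pA phat q ≤ c0 / 16) :
    ratioDev N pA phat q ≤ 16 / (15 * c0) * marginErr N pA phat q := by
  rw [ratioDev, marginErr, mul_sum]
  refine sum_le_sum fun y hy => ?_
  have hM := marginD_ge_of_marginErr_le hc0 herr hy
  have hMpos : 0 < marginD pA q y := lt_of_lt_of_le (by positivity) hM
  have hscale : 1 ≤ 16 / (15 * c0) * marginD pA q y := by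
    rw [div_mul_eq_mul_div, le_div_iff₀ (by positivity)]; linarith
  rw [div_sub_one hMpos.ne', abs_div, abs_of_pos hMpos, abs_sub_comm, div_le_iff₀ hMpos]
  nlinarith [abs_nonneg (marginD pA q y - phat y)]

end Ratio

lemma le_three_mul_of_le_mul_exp {v pbar x κ : ℝ} {t : ℕ} (hpbar : 0 ≤ pbar) (hx0 : 0 ≤ x)
    (hx : x ≤ 1 / 15) (hκ0 : 0 ≤ κ) (hκ : κ ≤ 14 / 15)
    (hv : v ≤ pbar * Real.exp (x * ∑ s ∈ range t, κ ^ s)) : v ≤ 3 * pbar := by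
  have hgeom : ∑ s ∈ range t, κ ^ s ≤ 15 := by
    have h := geom_sum_Ico_le_of_lt_one (m := 0) (n := t) hκ0 (by linarith)
    rw [← range_eq_Ico, pow_zero] at h
    exact h.trans <| by rw [div_le_iff₀ (by linarith)]; linarith
  have hexp : x * ∑ s ∈ range t, κ ^ s ≤ 1 := by
    nlinarith [sum_nonneg fun s (_ : s ∈ range t) => pow_nonneg hκ0 s]
  refine hv.trans ?_
  rw [mul_comm 3]
  exact mul_le_mul_of_nonneg_left
    ((Real.exp_le_exp.2 hexp).trans (Real.exp_one_lt_d9.le.trans (by norm_num))) hpbar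

section Iteration

variable {N : ℕ} {pA : ℕ → ℝ → ℝ} {phat : ℕ → ℝ} {c0 η : ℝ} {B : Set ℝ}

theorem npem_step (hK : IsMeasurementKernel N pA) (hphat1 : ∑ y ∈ range (N + 1), phat y = 1)
    (hc0pos : 0 < c0) (hc0 : ∀ y ∈ range (N + 1), c0 ≤ phat y)
    (hBmeas : MeasurableSet B) (hη0 : 0 ≤ η)
    (hη : ∀ y ∈ range (N + 1), ∀ y' ∈ range (N + 1), y ≠ y' → ∀ γ ∈ B, pA y γ * pA y' γ ≤ η)
    {Q κ : ℝ}
    (hκ : 2 * N * (η + Q / 4 * (volume (Icc (0:ℝ) 1 \ B)).toReal) * (16 / (15 * c0)) ≤ κ)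
    {q : ℝ → ℝ} (hq : IsDensity q) (hQ : ∀ γ ∈ Icc (0:ℝ) 1, q γ ≤ Q)
    (herr : marginErr N pA phat q ≤ c0 / 16) :
    IsDensity (npUpd0 N pA phat q) ∧
      (∀ γ ∈ Icc (0:ℝ) 1, npUpd0 N pA phat q γ ≤
        q γ * Real.exp (16 / (15 * c0) * marginErr N pA phat q)) ∧
      marginErr N pA phat (npUpd0 N pA phat q) ≤ κ * marginErr N pA phat q := by
  have hM : ∀ y ∈ range (N + 1), 0 < marginD pA q y := fun y hy =>
    lt_of_lt_of_le (by positivity) (marginD_ge_of_marginErr_le hc0 herr hy)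
  have hratio := ratioDev_le hc0pos hc0 herr
  have hQ0 : 0 ≤ Q := zero_le_one.trans (hq.one_le_of_le hQ)
  refine ⟨isDensity_npUpd0 hK hphat1 (fun y hy => hc0pos.le.trans (hc0 y hy)) hM hq,
    fun γ hγ => ?_, ?_⟩
  · calc npUpd0 N pA phat q γ ≤ q γ * (1 + ratioDev N pA phat q) :=
          npUpd0_le_mul_one_add_ratioDev hK hq.2.1 hγ
      _ ≤ q γ * Real.exp (16 / (15 * c0) * marginErr N pA phat q) := by
          refine mul_le_mul_of_nonneg_left ?_ (hq.2.1 γ)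
          linarith [Real.add_one_le_exp (16 / (15 * c0) * marginErr N pA phat q)]
  · have hW := fun y hy y' hy' hne =>
      pairInt_le hK hy hy' hne hBmeas hη0 (hη y hy y' hy' hne) hq hQ
    calc marginErr N pA phat (npUpd0 N pA phat q)
        ≤ 2 * N * (η + Q / 4 * (volume (Icc (0:ℝ) 1 \ B)).toReal) * ratioDev N pA phat q :=
          marginErr_npUpd0_le hK hq hM hW
      _ ≤ 2 * N * (η + Q / 4 * (volume (Icc (0:ℝ) 1 \ B)).toReal) *
            (16 / (15 * c0) * marginErr N pA phat q) := by gcongr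
      _ ≤ κ * marginErr N pA phat q := by
          rw [← mul_assoc]; exact mul_le_mul_of_nonneg_right hκ (marginErr_nonneg ..)

theorem npem_iterate_bounds (hK : IsMeasurementKernel N pA)
    (hphat1 : ∑ y ∈ range (N + 1), phat y = 1)
    (hc0pos : 0 < c0) (hc0 : ∀ y ∈ range (N + 1), c0 ≤ phat y)
    (hBmeas : MeasurableSet B) (hη0 : 0 ≤ η)
    (hη : ∀ y ∈ range (N + 1), ∀ y' ∈ range (N + 1), y ≠ y' → ∀ γ ∈ B, pA y γ * pA y' γ ≤ η)
    {pbar κ : ℝ}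
    (hκ : 2 * N * (η + 3 * pbar / 4 * (volume (Icc (0:ℝ) 1 \ B)).toReal) * (16 / (15 * c0)) ≤ κ)
    (hκ0 : 0 ≤ κ) (hκ1 : κ ≤ 14 / 15)
    {p0 : ℝ → ℝ} (hp0 : IsDensity p0) (hpbar : ∀ γ ∈ Icc (0:ℝ) 1, p0 γ ≤ pbar)
    (herr0 : marginErr N pA phat p0 ≤ c0 / 16) (t : ℕ) :
    IsDensity ((npUpd0 N pA phat)^[t] p0) ∧
      marginErr N pA phat ((npUpd0 N pA phat)^[t] p0) ≤ c0 / 16 ∧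
      ∀ γ ∈ Icc (0:ℝ) 1, (npUpd0 N pA phat)^[t] p0 γ ≤ 3 * pbar := by
  have hpbar0 : 0 ≤ pbar := zero_le_one.trans (hp0.one_le_of_le hpbar)
  have hx0 : 0 ≤ 16 / (15 * c0) * marginErr N pA phat p0 :=
    mul_nonneg (by positivity) (marginErr_nonneg ..)
  have hx : 16 / (15 * c0) * marginErr N pA phat p0 ≤ 1 / 15 := by
    rw [div_mul_eq_mul_div, div_le_iff₀ (by positivity)]; linarith
  set x := 16 / (15 * c0) * marginErr N pA phat p0
  set Inv : (ℝ → ℝ) → ℕ → Prop := fun q t => IsDensity q ∧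
    marginErr N pA phat q ≤ κ ^ t * marginErr N pA phat p0 ∧
    ∀ γ ∈ Icc (0:ℝ) 1, q γ ≤ pbar * Real.exp (x * ∑ s ∈ range t, κ ^ s)
  have hsmall : ∀ q t, Inv q t →
      marginErr N pA phat q ≤ c0 / 16 ∧ ∀ γ ∈ Icc (0:ℝ) 1, q γ ≤ 3 * pbar :=
    fun q t ⟨_, herr, hsup⟩ =>
      ⟨herr.trans <| (mul_le_of_le_one_left (marginErr_nonneg ..)
        (pow_le_one₀ hκ0 (hκ1.trans (by norm_num)))).trans herr0,
      fun γ hγ => le_three_mul_of_le_mul_exp hpbar0 hx0 hx hκ0 hκ1 (hsup γ hγ)⟩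
  have hinv : ∀ t, Inv ((npUpd0 N pA phat)^[t] p0) t := by
    intro t
    induction t with
    | zero => exact ⟨hp0, by simp, fun γ hγ => by simpa using hpbar γ hγ⟩
    | succ t ih =>
      obtain ⟨hdens, herr, hsup⟩ := ih
      obtain ⟨herr', hQ⟩ := hsmall _ t ⟨hdens, herr, hsup⟩
      obtain ⟨hdens', hgrow, hcontr⟩ :=
        npem_step hK hphat1 hc0pos hc0 hBmeas hη0 hη hκ hdens hQ herr'
      rw [Function.iterate_succ_apply']
      refine ⟨hdens', ?_, fun γ hγ => (hgrow γ hγ).trans ?_⟩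
      · rw [pow_succ', mul_assoc]
        exact hcontr.trans (mul_le_mul_of_nonneg_left herr hκ0)
      · rw [sum_range_succ, mul_add, Real.exp_add, ← mul_assoc]
        refine mul_le_mul (hsup γ hγ) (Real.exp_le_exp.2 ?_) (Real.exp_nonneg _)
          (mul_nonneg hpbar0 (Real.exp_nonneg _))
        exact (mul_le_mul_of_nonneg_left herr (by positivity)).trans_eq (by ring)
  exact ⟨(hinv t).1, hsmall _ t (hinv t)⟩

end Iteration

lemma le_sSup_pairProducts {N : ℕ} {pA : ℕ → ℝ → ℝ} (hK : IsMeasurementKernel N pA)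
    {B : Set ℝ} (hB : B ⊆ Icc (0:ℝ) 1) {y y' : ℕ} (hy : y ∈ range (N + 1))
    (hy' : y' ∈ range (N + 1)) (hne : y ≠ y') {γ : ℝ} (hγ : γ ∈ B) :
    pA y γ * pA y' γ ≤ sSup {x : ℝ | ∃ y ∈ range (N + 1), ∃ y' ∈ range (N + 1),
      y ≠ y' ∧ ∃ γ ∈ B, x = pA y γ * pA y' γ} := by
  refine le_csSup ⟨1, ?_⟩ ⟨y, hy, y', hy', hne, γ, hγ, rfl⟩
  rintro _ ⟨y, hy, y', hy', -, γ, hγ, rfl⟩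
  exact mul_le_one₀ (hK.le_one hy (hB hγ)) (hK.nonneg y' γ) (hK.le_one hy' (hB hγ))

lemma mul_toReal_le_of_le_ofReal {μB : ENNReal} {δ b p E n : ℝ} (hμB : μB ≤ ENNReal.ofReal δ)
    (hb : 0 ≤ b) (hp : 0 < p) (hE : 1 ≤ E) (hn : 0 < n) (hδ : δ ≤ b / (4 * p * E * n)) :
    p * μB.toReal ≤ b / (4 * n) := by
  have hμB' : μB.toReal ≤ b / (4 * p * n) := by
    refine (ENNReal.toReal_mono ENNReal.ofReal_ne_top hμB).trans ?_
    rw [ENNReal.toReal_ofReal']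
    refine max_le (hδ.trans (div_le_div_of_nonneg_left hb (by positivity) ?_)) (by positivity)
    nlinarith [mul_pos hp hn]
  calc p * μB.toReal ≤ p * (b / (4 * p * n)) := mul_le_mul_of_nonneg_left hμB' hp.le
    _ = b / (4 * n) := by field_simp

lemma npem_rate_le {N : ℕ} {η pbar m c0 ρ : ℝ} (hc0 : 0 < c0) (hη0 : 0 ≤ η)
    (hη : η ≤ ρ * c0 / (4 * (N + 1))) (hm0 : 0 ≤ pbar * m)
    (hm : pbar * m ≤ ρ * c0 / (4 * (N + 2))) :
    2 * N * (η + 3 * pbar / 4 * m) * (16 / (15 * c0)) ≤ 14 / 15 * ρ := by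
  have hN : (0:ℝ) ≤ N := N.cast_nonneg
  rw [le_div_iff₀ (by positivity)] at hη hm
  rw [← mul_div_assoc, div_le_iff₀ (by positivity)]
  nlinarith [mul_nonneg hN hη0, mul_nonneg hN hm0]

theorem npem_linear_convergence_general
    (N : ℕ) (pA : ℕ → ℝ → ℝ) (phat : ℕ → ℝ)
    (hpAmeas : ∀ y, Measurable (pA y)) (hpAnonneg : ∀ y γ, 0 ≤ pA y γ)
    (hpAsum : ∀ γ ∈ Set.Icc (0:ℝ) 1, ∑ y ∈ Finset.range (N + 1), pA y γ = 1)
    (hphat1 : ∑ y ∈ Finset.range (N + 1), phat y = 1)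
    -- (L4): `c₀ = min_y p̂(y) > 0`
    (c0 : ℝ) (hc0def : c0 = (Finset.range (N + 1)).inf' ⟨0, Finset.mem_range.mpr (Nat.succ_pos N)⟩ phat)
    (hc0pos : 0 < c0)
    (ρ ε δ : ℝ) (hρ0 : 0 ≤ ρ) (hρ1 : ρ < 1)
    -- (L5): `0 < ε ≤ ρ/16`
    (hε : ε ≤ ρ / 16)
    -- the region `B ⊆ [0,1]` whose complement has Lebesgue measure at most `δ`
    (B : Set ℝ) (hB : B ⊆ Set.Icc (0:ℝ) 1) (hBmeas : MeasurableSet B)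
    (hBc : volume (Set.Icc (0:ℝ) 1 \ B) ≤ ENNReal.ofReal δ)
    -- the initial density `p⁽⁰⁾` and its supremum `p̄ < ∞`
    (p0 : ℝ → ℝ) (hp0 : IsDensity p0)
    (pbar : ℝ) (hpbarBdd : BddAbove (p0 '' Set.Icc (0:ℝ) 1))
    (hpbar : pbar = sSup (p0 '' Set.Icc (0:ℝ) 1))
    -- `η₁` and `η₂`
    (η₁ : ℝ)
    (hη₁ : η₁ = sSup {x : ℝ | ∃ y ∈ Finset.range (N + 1), ∃ y' ∈ Finset.range (N + 1),
      y ≠ y' ∧ ∃ γ ∈ B, x = pA y γ * pA y' γ})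
    -- (L1): `‖p⁽⁰⁾_MA − p̂‖₁ ≤ ε c₀`
    (hL1 : ∑ y ∈ Finset.range (N + 1), |marginD pA p0 y - phat y| ≤ ε * c0)
    -- (L2): `η₁ ≤ ρ c₀ / (4 (N+1))`
    (hL2 : η₁ ≤ ρ * c0 / (4 * (N + 1)))
    -- (L6)
    (hL6 : δ ≤ ρ * c0 / (4 * pbar *
      Real.exp ((ρ / (1 - ρ)) * (1 / c0) *
        ∑ y ∈ Finset.range (N + 1), |marginD pA p0 y - phat y|) * (N + 2))) :
    ∀ t : ℕ,
      ∑ y ∈ Finset.range (N + 1),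
          |marginD pA ((npUpd0 N pA phat)^[t + 1] p0) y - phat y|
        ≤ ρ * ∑ y ∈ Finset.range (N + 1),
            |marginD pA ((npUpd0 N pA phat)^[t] p0) y - phat y| := by
  have hK : IsMeasurementKernel N pA := ⟨hpAmeas, hpAnonneg, hpAsum⟩
  have hc0 : ∀ y ∈ range (N + 1), c0 ≤ phat y := fun y hy => hc0def ▸ inf'_le _ hy
  have hp0le : ∀ γ ∈ Icc (0:ℝ) 1, p0 γ ≤ pbar := fun γ hγ =>
    hpbar ▸ le_csSup hpbarBdd (mem_image_of_mem p0 hγ)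
  have hpbar1 : 1 ≤ pbar := hp0.one_le_of_le hp0le
  have hη : ∀ y ∈ range (N + 1), ∀ y' ∈ range (N + 1), y ≠ y' → ∀ γ ∈ B,
      pA y γ * pA y' γ ≤ η₁ := fun y hy y' hy' hne γ hγ =>
    hη₁ ▸ le_sSup_pairProducts hK hB hy hy' hne hγ
  have hη0 : 0 ≤ η₁ := hη₁ ▸ Real.sSup_nonneg (by
    rintro _ ⟨y, -, y', -, -, γ, -, rfl⟩; exact mul_nonneg (hK.nonneg y γ) (hK.nonneg y' γ))
  have herr0 : marginErr N pA phat p0 ≤ c0 / 16 := hL1.trans (by nlinarith)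
  have hexp : 0 ≤ ρ / (1 - ρ) * (1 / c0) * marginErr N pA phat p0 :=
    mul_nonneg (mul_nonneg (div_nonneg hρ0 (by linarith)) (by positivity)) (marginErr_nonneg ..)
  have hvol : pbar * (volume (Icc (0:ℝ) 1 \ B)).toReal ≤ ρ * c0 / (4 * (N + 2)) :=
    mul_toReal_le_of_le_ofReal hBc (by positivity) (by linarith) (Real.one_le_exp hexp)
      (by positivity) hL6
  have hrate := npem_rate_le hc0pos hη0 hL2 (by positivity) hvol
  intro t
  obtain ⟨hdens, herr, hQ⟩ := npem_iterate_bounds hK hphat1 hc0pos hc0 hBmeas hη0 hη hrate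
    (by linarith) (by linarith) hp0 hp0le herr0 t
  rw [Function.iterate_succ_apply']
  exact (npem_step hK hphat1 hc0pos hc0 hBmeas hη0 hη hrate hdens hQ herr).2.2.trans
    (mul_le_mul_of_nonneg_right (by linarith) (marginErr_nonneg ..))

/-- **Theorem (linear convergence of the NPEM algorithm).**
Under the sharpness assumptions (L1)–(L6), the unregularized NPEM iterates satisfy
`‖p^(t+1)_MA − p̂‖₁ ≤ ρ·‖p^(t)_MA − p̂‖₁` for every `t`. -/
theorem npem_linear_convergence
    (N : ℕ) (pA : ℕ → ℝ → ℝ) (phat : ℕ → ℝ)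
    (hpAmeas : ∀ y, Measurable (pA y)) (hpAnonneg : ∀ y γ, 0 ≤ pA y γ)
    (hpAsum : ∀ γ ∈ Set.Icc (0:ℝ) 1, ∑ y ∈ Finset.range (N + 1), pA y γ = 1)
    (hphat1 : ∑ y ∈ Finset.range (N + 1), phat y = 1) (hphatnn : ∀ y, 0 ≤ phat y)
    -- (L4): `c₀ = min_y p̂(y) > 0`
    (c0 : ℝ) (hc0def : c0 = (Finset.range (N + 1)).inf' ⟨0, Finset.mem_range.mpr (Nat.succ_pos N)⟩ phat)
    (hc0pos : 0 < c0)
    (ρ ε δ : ℝ) (hρ0 : 0 ≤ ρ) (hρ1 : ρ < 1)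
    -- (L5): `0 < ε ≤ ρ/16`
    (hε0 : 0 < ε) (hε : ε ≤ ρ / 16)
    (hδ0 : 0 < δ)
    -- the region `B ⊆ [0,1]` whose complement has Lebesgue measure at most `δ`
    (B : Set ℝ) (hB : B ⊆ Set.Icc (0:ℝ) 1) (hBmeas : MeasurableSet B)
    (hBc : volume (Set.Icc (0:ℝ) 1 \ B) ≤ ENNReal.ofReal δ)
    -- the initial density `p⁽⁰⁾` and its supremum `p̄ < ∞`
    (p0 : ℝ → ℝ) (hp0 : IsDensity p0)
    (pbar : ℝ) (hpbarBdd : BddAbove (p0 '' Set.Icc (0:ℝ) 1))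
    (hpbar : pbar = sSup (p0 '' Set.Icc (0:ℝ) 1))
    -- `η₁` and `η₂`
    (η₁ η₂ : ℝ)
    (hη₁ : η₁ = sSup {x : ℝ | ∃ y ∈ Finset.range (N + 1), ∃ y' ∈ Finset.range (N + 1),
      y ≠ y' ∧ ∃ γ ∈ B, x = pA y γ * pA y' γ})
    (hη₂ : η₂ = sSup {x : ℝ | ∃ y ∈ Finset.range (N + 1), ∃ γ ∈ B,
      x = ∑ y' ∈ (Finset.range (N + 1)).erase y, pA y γ * pA y' γ})
    -- (L1): `‖p⁽⁰⁾_MA − p̂‖₁ ≤ ε c₀`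
    (hL1 : ∑ y ∈ Finset.range (N + 1), |marginD pA p0 y - phat y| ≤ ε * c0)
    -- (L2): `η₁ ≤ ρ c₀ / (4 (N+1))`
    (hL2 : η₁ ≤ ρ * c0 / (4 * (N + 1)))
    -- (L3): `η₂ ≤ ρ c₀ / 4`
    (hL3 : η₂ ≤ ρ * c0 / 4)
    -- (L6)
    (hL6 : δ ≤ ρ * c0 / (4 * pbar *
      Real.exp ((ρ / (1 - ρ)) * (1 / c0) *
        ∑ y ∈ Finset.range (N + 1), |marginD pA p0 y - phat y|) * (N + 2))) :
    ∀ t : ℕ,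
      ∑ y ∈ Finset.range (N + 1),
          |marginD pA ((npUpd0 N pA phat)^[t + 1] p0) y - phat y|
        ≤ ρ * ∑ y ∈ Finset.range (N + 1),
            |marginD pA ((npUpd0 N pA phat)^[t] p0) y - phat y| :=
  npem_linear_convergence_general N pA phat hpAmeas hpAnonneg hpAsum hphat1 c0 hc0def hc0pos ρ ε δ
    hρ0 hρ1 hε B hB hBmeas hBc p0 hp0 pbar hpbarBdd hpbar η₁ hη₁ hL1 hL2 hL6
end

section
/- Fix μ > 0. Let Q be a probability measure on [0,1] with Lebesgue density q such that ∫₀¹ log q(γ) dγ > −∞ and p_A(y;Q) := ∫₀¹ p_A(y|γ) dQ(γ) > 0 whenever p̂(y) > 0. Let Q_s be a probability measure on [0,1] that is singular with respect to Lebesgue measure, and set G = Q_s − Q. Then the one-sided directional (Gâteaux) derivative of ℓ_μ at Q in direction G exists and equals lim_{λ→0⁺} (ℓ_μ[Q + λG] − ℓ_μ[Q])/λ = ∑_{y=0}^N p̂(y)·p_A(y;Q_s)/p_A(y;Q) − 1 − μ, where p_A(y;Q_s) = ∫₀¹ p_A(y|γ) dQ_s(γ). -/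
open MeasureTheory Set Filter Topology
open scoped Classical

/-!
Along the segment `Q_λ = (1 - λ) Q + λ Q_s` every marginal `p_A(y; Q_λ)` is affine in `λ`.
Because `Q_s` is singular, `dP_U/dQ_λ = 1 / ((1 - λ) q)` Lebesgue-a.e., so
`D(P_U‖Q_λ) = -log (1 - λ) - ∫ log q`. Hence for `λ ∈ [0, 1)` the value `ℓ_μ[Q_λ]` is a finite
sum of logarithms of affine functions of `λ`, and the one-sided derivative at `0` is the
ordinary derivative of that function.
-/

open scoped ENNReal

instance isProbabilityMeasure_lebI : IsProbabilityMeasure lebI :=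
  ⟨by simp [lebI]⟩

lemma lebI_compl_Icc : lebI (Icc (0:ℝ) 1)ᶜ = 0 := by
  simp [lebI, Measure.restrict_apply measurableSet_Icc.compl]

lemma IsDensity.lintegral_ofReal {q : ℝ → ℝ} (hq : IsDensity q) :
    ∫⁻ γ, ENNReal.ofReal (q γ) ∂lebI = 1 := by
  have hint : Integrable q lebI := .of_integral_ne_zero (by simp [hq.2.2])
  rw [← ofReal_integral_eq_lintegral_ofReal hint (.of_forall hq.2.1), hq.2.2, ENNReal.ofReal_one]

lemma IsDensity.isProbabilityMeasure_densM {q : ℝ → ℝ} (hq : IsDensity q) :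
    IsProbabilityMeasure (densM q) :=
  ⟨by rw [densM, withDensity_apply _ .univ, Measure.restrict_univ, hq.lintegral_ofReal]⟩

lemma densM_compl_Icc (q : ℝ → ℝ) : densM q (Icc (0:ℝ) 1)ᶜ = 0 :=
  withDensity_absolutelyContinuous _ _ lebI_compl_Icc

lemma smul_densM {q : ℝ → ℝ} (hq : Measurable q) {a : ℝ} (ha : 0 ≤ a) :
    ENNReal.ofReal a • densM q = lebI.withDensity fun γ => ENNReal.ofReal (a * q γ) := by
  rw [densM, ← withDensity_smul _ hq.ennreal_ofReal]
  congr 1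
  funext γ
  rw [Pi.smul_apply, smul_eq_mul, ENNReal.ofReal_mul ha]

lemma integrable_of_sum_eq_one_on_Icc {N : ℕ} {pA : ℕ → ℝ → ℝ} {y : ℕ}
    (hy : y ∈ Finset.range (N + 1)) (hmeas : Measurable (pA y)) (hnonneg : ∀ y γ, 0 ≤ pA y γ)
    (hsum : ∀ γ ∈ Icc (0:ℝ) 1, ∑ y ∈ Finset.range (N + 1), pA y γ = 1)
    {P : Measure ℝ} [IsFiniteMeasure P] (hP : P (Icc (0:ℝ) 1)ᶜ = 0) :
    Integrable (pA y) P := by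
  refine (integrable_const (1:ℝ)).mono' hmeas.aestronglyMeasurable ?_
  filter_upwards [measure_eq_zero_iff_ae_notMem.mp hP] with γ hγ
  rw [Real.norm_of_nonneg (hnonneg y γ), ← hsum γ (not_not.mp hγ)]
  exact Finset.single_le_sum (fun i _ => hnonneg i γ) hy

lemma margin_densM (pA : ℕ → ℝ → ℝ) {q : ℝ → ℝ} (hq : Measurable q) (hq0 : ∀ γ, 0 ≤ q γ)
    (y : ℕ) : margin pA (densM q) y = ∫ γ, pA y γ * q γ ∂lebI := by
  have : densM q = lebI.withDensity fun γ => ((q γ).toNNReal : ℝ≥0∞) := rfl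
  rw [margin, this, integral_withDensity_eq_integral_smul hq.real_toNNReal]
  simp only [NNReal.smul_def, smul_eq_mul, Real.coe_toNNReal _ (hq0 _), mul_comm]

lemma margin_smul_add_smul {pA : ℕ → ℝ → ℝ} {y : ℕ} {P R : Measure ℝ}
    (hP : Integrable (pA y) P) (hR : Integrable (pA y) R) {a b : ℝ} (ha : 0 ≤ a) (hb : 0 ≤ b) :
    margin pA (ENNReal.ofReal a • P + ENNReal.ofReal b • R) y
      = a * margin pA P y + b * margin pA R y := by
  rw [margin, integral_add_measure (hP.smul_measure ENNReal.ofReal_ne_top)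
    (hR.smul_measure ENNReal.ofReal_ne_top), integral_smul_measure, integral_smul_measure,
    ENNReal.toReal_ofReal ha, ENNReal.toReal_ofReal hb, smul_eq_mul, smul_eq_mul, margin, margin]

lemma KLdiv_withDensity_add_of_mutuallySingular {ρ ν : Measure ℝ} [SigmaFinite ρ]
    [SigmaFinite ν] {f : ℝ → ℝ} (hf : Measurable f) (hfpos : ∀ᵐ x ∂ρ, 0 < f x)
    (hlog : Integrable (fun x => Real.log (f x)) ρ) (hν : ν ⟂ₘ ρ) :
    KLdiv ρ (ρ.withDensity (fun x => ENNReal.ofReal (f x)) + ν)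
      = ((-∫ x, Real.log (f x) ∂ρ : ℝ) : EReal) := by
  set W := ρ.withDensity fun x => ENNReal.ofReal (f x)
  have hac : ρ ≪ W + ν := by
    refine (withDensity_absolutelyContinuous' hf.ennreal_ofReal.aemeasurable ?_).add_right ν
    filter_upwards [hfpos] with x hx
    simpa using hx
  have hrn : ρ.rnDeriv (W + ν) =ᵐ[ρ] fun x => (ENNReal.ofReal (f x))⁻¹ := by
    filter_upwards [(Measure.inv_rnDeriv' hac).symm,
      Measure.rnDeriv_add_of_mutuallySingular W ν ρ hν,
      Measure.rnDeriv_withDensity ρ hf.ennreal_ofReal] with x hinv hadd hW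
    rw [hinv, Pi.inv_apply, hadd, hW]
  have hlogeq : (fun x => Real.log ((ρ.rnDeriv (W + ν) x).toReal))
      =ᵐ[ρ] fun x => -Real.log (f x) := by
    filter_upwards [hrn, hfpos] with x hx hfx
    rw [hx, ENNReal.toReal_inv, ENNReal.toReal_ofReal hfx.le, Real.log_inv]
  rw [KLdiv, if_pos ⟨hac, hlog.neg.congr hlogeq.symm⟩, integral_congr_ae hlogeq, integral_neg]

lemma KLdiv_lebI_smul_densM_add {q : ℝ → ℝ} (hq : Measurable q) (hqpos : ∀ᵐ γ ∂lebI, 0 < q γ)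
    (hqlog : Integrable (fun γ => Real.log (q γ)) lebI) {a : ℝ} (ha : 0 < a)
    {ν : Measure ℝ} [SigmaFinite ν] (hν : ν ⟂ₘ lebI) :
    KLdiv lebI (ENNReal.ofReal a • densM q + ν)
      = ((-Real.log a - ∫ γ, Real.log (q γ) ∂lebI : ℝ) : EReal) := by
  have hlog : (fun γ => Real.log (a * q γ)) =ᵐ[lebI] fun γ => Real.log a + Real.log (q γ) := by
    filter_upwards [hqpos] with γ hγ
    exact Real.log_mul ha.ne' hγ.ne'
  rw [smul_densM hq ha.le, KLdiv_withDensity_add_of_mutuallySingular (hq.const_mul a)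
    (by filter_upwards [hqpos] with γ hγ; positivity)
    (((integrable_const _).add hqlog).congr hlog.symm) hν,
    integral_congr_ae hlog, integral_add (integrable_const _) hqlog]
  simp only [integral_const, probReal_univ, one_smul, neg_add, sub_eq_add_neg]

lemma hasDerivAt_sum_mul_log_lineMap {ι : Type*} (t : Finset ι) (w m s : ι → ℝ)
    (hm : ∀ i ∈ t, w i ≠ 0 → m i ≠ 0) :
    HasDerivAt (fun x => ∑ i ∈ t, w i * Real.log ((1 - x) * m i + x * s i))
      (∑ i ∈ t, (w i * s i / m i - w i)) 0 := by
  refine HasDerivAt.fun_sum fun i hi => ?_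
  by_cases hw : w i = 0
  · simpa [hw] using hasDerivAt_const (0:ℝ) (0:ℝ)
  have hline : HasDerivAt (fun x : ℝ => (1 - x) * m i + x * s i) (s i - m i) 0 :=
    ((((hasDerivAt_id' (0:ℝ)).const_sub 1).mul_const (m i)).fun_add
      ((hasDerivAt_id' (0:ℝ)).mul_const (s i))).congr_deriv (by ring)
  refine ((hline.log (by simpa using hm i hi hw)).const_mul (w i)).congr_deriv ?_
  field_simp [hm i hi hw]
  ring

lemma regLoglik_mixture {N : ℕ} {pA : ℕ → ℝ → ℝ} {phat : ℕ → ℝ} {μ : ℝ} {q : ℝ → ℝ}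
    {Qs : Measure ℝ} [IsFiniteMeasure Qs]
    (hpAmeas : ∀ y, Measurable (pA y)) (hpAnonneg : ∀ y γ, 0 ≤ pA y γ)
    (hpAsum : ∀ γ ∈ Icc (0:ℝ) 1, ∑ y ∈ Finset.range (N + 1), pA y γ = 1)
    (hq : IsDensity q) (hqpos : ∀ᵐ γ ∂lebI, 0 < q γ)
    (hqlog : Integrable (fun γ => Real.log (q γ)) lebI)
    (hmarg : ∀ y ∈ Finset.range (N + 1), 0 < phat y → 0 < ∫ γ, pA y γ * q γ ∂lebI)
    (hQsI : Qs (Icc (0:ℝ) 1)ᶜ = 0) (hQssing : Qs ⟂ₘ volume) {lam : ℝ} (hlam : lam ∈ Ico 0 1) :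
    regLoglik N pA phat μ (ENNReal.ofReal (1 - lam) • densM q + ENNReal.ofReal lam • Qs)
      = (((∑ y ∈ Finset.range (N + 1), phat y * Real.log
              ((1 - lam) * ∫ γ, pA y γ * q γ ∂lebI + lam * ∫ γ, pA y γ ∂Qs))
          + μ * Real.log (1 - lam) + μ * ∫ γ, Real.log (q γ) ∂lebI : ℝ) : EReal) := by
  have := hq.isProbabilityMeasure_densM
  have := Qs.smul_finite (ENNReal.ofReal_ne_top (r := lam))
  have h1lam : 0 < 1 - lam := by linarith [hlam.2]
  have hmargin : ∀ y ∈ Finset.range (N + 1),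
      margin pA (ENNReal.ofReal (1 - lam) • densM q + ENNReal.ofReal lam • Qs) y
        = (1 - lam) * ∫ γ, pA y γ * q γ ∂lebI + lam * ∫ γ, pA y γ ∂Qs := fun y hy => by
    rw [margin_smul_add_smul
      (integrable_of_sum_eq_one_on_Icc hy (hpAmeas y) hpAnonneg hpAsum (densM_compl_Icc q))
      (integrable_of_sum_eq_one_on_Icc hy (hpAmeas y) hpAnonneg hpAsum hQsI) h1lam.le hlam.1,
      margin_densM pA hq.1 hq.2.1, margin]
  have hpos : ∀ y ∈ Finset.range (N + 1), 0 < phat y →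
      0 < margin pA (ENNReal.ofReal (1 - lam) • densM q + ENNReal.ofReal lam • Qs) y :=
    fun y hy hp => by
      rw [hmargin y hy]
      exact add_pos_of_pos_of_nonneg (mul_pos h1lam (hmarg y hy hp))
        (mul_nonneg hlam.1 (integral_nonneg (hpAnonneg y)))
  have hsing : ENNReal.ofReal lam • Qs ⟂ₘ lebI :=
    hQssing.smul _ |>.mono_ac .rfl (Measure.absolutelyContinuous_of_le Measure.restrict_le_self)
  rw [regLoglik, loglik, if_pos hpos, KLdiv_lebI_smul_densM_add hq.1 hqpos hqlog h1lam hsing,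
    Finset.sum_congr rfl fun y hy => by rw [hmargin y hy], ← EReal.coe_mul, ← EReal.coe_sub,
    EReal.coe_eq_coe_iff]
  ring

theorem gateaux_derivative_singular_direction_general
    (N : ℕ) (pA : ℕ → ℝ → ℝ) (phat : ℕ → ℝ)
    (hpAmeas : ∀ y, Measurable (pA y)) (hpAnonneg : ∀ y γ, 0 ≤ pA y γ)
    (hpAsum : ∀ γ ∈ Set.Icc (0:ℝ) 1, ∑ y ∈ Finset.range (N + 1), pA y γ = 1)
    (hphat : ∀ y, 0 ≤ phat y) (hphat1 : ∑ y ∈ Finset.range (N + 1), phat y = 1)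
    (μ : ℝ)
    (q : ℝ → ℝ) (hq : IsDensity q)
    (hqpos : ∀ᵐ γ ∂lebI, 0 < q γ)
    (hqlog : Integrable (fun γ => Real.log (q γ)) lebI)
    (hmarg : ∀ y ∈ Finset.range (N + 1), 0 < phat y → 0 < ∫ γ, pA y γ * q γ ∂lebI)
    (Qs : Measure ℝ) (hQsprob : IsProbabilityMeasure Qs)
    (hQsI : Qs (Set.Icc (0:ℝ) 1)ᶜ = 0)
    (hQssing : Measure.MutuallySingular Qs volume) :
    Tendsto
      (fun lam : ℝ =>
        ((regLoglik N pA phat μ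
              (ENNReal.ofReal (1 - lam) • densM q + ENNReal.ofReal lam • Qs)).toReal
          - (regLoglik N pA phat μ (densM q)).toReal) / lam)
      (𝓝[>] 0)
      (𝓝 (∑ y ∈ Finset.range (N + 1),
            phat y * (∫ γ, pA y γ ∂Qs) / (∫ γ, pA y γ * q γ ∂lebI) - 1 - μ)) := by
  set m : ℕ → ℝ := fun y => ∫ γ, pA y γ * q γ ∂lebI
  set s : ℕ → ℝ := fun y => ∫ γ, pA y γ ∂Qs
  set g : ℝ → ℝ := fun lam =>
    (∑ y ∈ Finset.range (N + 1), phat y * Real.log ((1 - lam) * m y + lam * s y))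
      + μ * Real.log (1 - lam) + μ * ∫ γ, Real.log (q γ) ∂lebI
  have hg : HasDerivAt g (∑ y ∈ Finset.range (N + 1), phat y * s y / m y - 1 - μ) 0 := by
    have hsum := hasDerivAt_sum_mul_log_lineMap _ phat m s fun y hy hp =>
      (hmarg y hy ((hphat y).lt_of_ne' hp)).ne'
    have hlog := (((hasDerivAt_id' (0:ℝ)).const_sub 1).log (by simp)).const_mul μ
    refine ((hsum.fun_add hlog).add_const _).congr_deriv ?_
    rw [Finset.sum_sub_distrib, hphat1]
    ring
  have hpath : ∀ lam ∈ Ico (0:ℝ) 1, (regLoglik N pA phat μ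
      (ENNReal.ofReal (1 - lam) • densM q + ENNReal.ofReal lam • Qs)).toReal = g lam :=
    fun lam hlam => by
      rw [regLoglik_mixture hpAmeas hpAnonneg hpAsum hq hqpos hqlog hmarg hQsI hQssing hlam,
        EReal.toReal_coe]
  have hQ : (regLoglik N pA phat μ (densM q)).toReal = g 0 := by simpa using hpath 0 (by simp)
  refine hg.tendsto_slope_zero_right.congr' ?_
  filter_upwards [Ioo_mem_nhdsGT (zero_lt_one' ℝ)] with lam hlam
  rw [hQ, hpath lam (Ioo_subset_Ico_self hlam), zero_add, smul_eq_mul, div_eq_inv_mul]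

/-- **Lemma (Gâteaux derivative of `ℓ_μ` in a singular direction).**
Fix `μ > 0`.  Let `Q` be a probability measure on `[0,1]` with Lebesgue density `q`
such that `∫₀¹ log q > −∞` and `p_A(y;Q) > 0` whenever `p̂(y) > 0`.  Let `Q_s` be a
probability measure on `[0,1]` singular w.r.t. Lebesgue measure, and let
`G = Q_s − Q`.  Then the one-sided directional derivative of `ℓ_μ` at `Q` in direction
`G` exists and equals `∑_y p̂(y) p_A(y;Q_s)/p_A(y;Q) − 1 − μ`. -/
theorem gateaux_derivative_singular_direction
    (N : ℕ) (pA : ℕ → ℝ → ℝ) (phat : ℕ → ℝ)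
    (hpAmeas : ∀ y, Measurable (pA y)) (hpAnonneg : ∀ y γ, 0 ≤ pA y γ)
    (hpAsum : ∀ γ ∈ Set.Icc (0:ℝ) 1, ∑ y ∈ Finset.range (N + 1), pA y γ = 1)
    (hphat : ∀ y, 0 ≤ phat y) (hphat1 : ∑ y ∈ Finset.range (N + 1), phat y = 1)
    (μ : ℝ) (hμ : 0 < μ)
    (q : ℝ → ℝ) (hq : IsDensity q)
    (hqpos : ∀ᵐ γ ∂lebI, 0 < q γ)
    (hqlog : Integrable (fun γ => Real.log (q γ)) lebI)
    (hmarg : ∀ y ∈ Finset.range (N + 1), 0 < phat y → 0 < ∫ γ, pA y γ * q γ ∂lebI)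
    (Qs : Measure ℝ) (hQsprob : IsProbabilityMeasure Qs)
    (hQsI : Qs (Set.Icc (0:ℝ) 1)ᶜ = 0)
    (hQssing : Measure.MutuallySingular Qs volume) :
    Tendsto
      (fun lam : ℝ =>
        ((regLoglik N pA phat μ
              (ENNReal.ofReal (1 - lam) • densM q + ENNReal.ofReal lam • Qs)).toReal
          - (regLoglik N pA phat μ (densM q)).toReal) / lam)
      (𝓝[>] 0)
      (𝓝 (∑ y ∈ Finset.range (N + 1),
            phat y * (∫ γ, pA y γ ∂Qs) / (∫ γ, pA y γ * q γ ∂lebI) - 1 - μ)) :=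
  gateaux_derivative_singular_direction_general N pA phat hpAmeas hpAnonneg hpAsum hphat hphat1 μ q
    hq hqpos hqlog hmarg Qs hQsprob hQsI hQssing
end

section
/- Assume c₀ := min_{0≤y≤N} p̂(y) > 0. Let p be a probability density on [0,1] with implied marginal p_MA(y) = ∫₀¹ p_A(y|γ) p(γ) dγ > 0 for all y, and suppose ‖p_MA − p̂‖₁ := ∑_{y=0}^N |p_MA(y) − p̂(y)| ≤ ε·c₀ for some ε ∈ (0,1). Let p′ be the unregularized NPEM update of p. Then for every γ ∈ [0,1], p′(γ) ≤ p(γ)·(1 + (1/(1−ε))·‖p_MA − p̂‖₁/c₀). -/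
open MeasureTheory Set Filter Topology

/-!
Since `p̂(y) ≥ c₀` and `|p_MA(y) − p̂(y)| ≤ ε c₀`, every marginal satisfies
`p_MA(y) ≥ (1 − ε) c₀`, so each likelihood ratio obeys
`p̂(y)/p_MA(y) ≤ 1 + |p_MA(y) − p̂(y)|/((1 − ε) c₀)`. The update at `γ` is `p(γ)` times the
average of these ratios with weights `p_A(·|γ)`, which sum to one and hence are at most one.
-/

open Finset

lemma one_sub_mul_le_of_abs_sub_le {c q m ε : ℝ} (hcq : c ≤ q) (hmq : |m - q| ≤ ε * c) :
    (1 - ε) * c ≤ m := by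
  linarith [neg_abs_le (m - q)]

lemma div_le_one_add_abs_sub_div {q m K : ℝ} (hK : 0 < K) (hKm : K ≤ m) :
    q / m ≤ 1 + |m - q| / K := by
  have hm : 0 < m := hK.trans_le hKm
  calc q / m = 1 + (q - m) / m := by field_simp; ring
    _ ≤ 1 + |m - q| / m := by gcongr; rw [abs_sub_comm]; exact le_abs_self _
    _ ≤ 1 + |m - q| / K := by gcongr

lemma sum_mul_one_add_le_one_add_sum {ι : Type*} {s : Finset ι} {w d : ι → ℝ}
    (hw0 : ∀ i ∈ s, 0 ≤ w i) (hw1 : ∑ i ∈ s, w i = 1) (hd : ∀ i ∈ s, 0 ≤ d i) :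
    ∑ i ∈ s, w i * (1 + d i) ≤ 1 + ∑ i ∈ s, d i := by
  have hw_le_one : ∀ i ∈ s, w i ≤ 1 := fun i hi => hw1 ▸ single_le_sum hw0 hi
  rw [sum_congr rfl fun i _ => mul_one_add (w i) (d i), sum_add_distrib, hw1]
  gcongr with i hi
  exact mul_le_of_le_one_left (hd i hi) (hw_le_one i hi)

lemma npUpd0_eq_mul_sum (N : ℕ) (pA : ℕ → ℝ → ℝ) (phat : ℕ → ℝ) (p : ℝ → ℝ) (γ : ℝ) :
    npUpd0 N pA phat p γ
      = p γ * ∑ y ∈ range (N + 1), pA y γ * (phat y / marginD pA p y) := by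
  simp only [npUpd0, mul_sum]
  refine sum_congr rfl fun y _ => ?_
  ring

theorem npem_update_pointwise_bound_general
    (N : ℕ) (pA : ℕ → ℝ → ℝ) (phat : ℕ → ℝ)
    (hpAnonneg : ∀ y γ, 0 ≤ pA y γ)
    (hpAsum : ∀ γ ∈ Set.Icc (0:ℝ) 1, ∑ y ∈ Finset.range (N + 1), pA y γ = 1)
    (c0 : ℝ) (hc0def : c0 = (Finset.range (N + 1)).inf' Finset.nonempty_range_add_one phat)
    (hc0pos : 0 < c0)
    (p : ℝ → ℝ) (hp : IsDensity p)
    (ε : ℝ) (hε1 : ε < 1)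
    (hclose : ∑ y ∈ Finset.range (N + 1), |marginD pA p y - phat y| ≤ ε * c0) :
    ∀ γ ∈ Set.Icc (0:ℝ) 1,
      npUpd0 N pA phat p γ
        ≤ p γ * (1 + (1 / (1 - ε)) *
            (∑ y ∈ Finset.range (N + 1), |marginD pA p y - phat y|) / c0) := by
  intro γ hγ
  have hK : 0 < (1 - ε) * c0 := mul_pos (by linarith) hc0pos
  have hmarg_ge : ∀ y ∈ range (N + 1), (1 - ε) * c0 ≤ marginD pA p y := fun y hy =>
    one_sub_mul_le_of_abs_sub_le (hc0def ▸ inf'_le phat hy)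
      ((single_le_sum (fun i _ => abs_nonneg (marginD pA p i - phat i)) hy).trans hclose)
  rw [npUpd0_eq_mul_sum]
  refine mul_le_mul_of_nonneg_left ?_ (hp.2.1 γ)
  calc ∑ y ∈ range (N + 1), pA y γ * (phat y / marginD pA p y)
      ≤ ∑ y ∈ range (N + 1), pA y γ * (1 + |marginD pA p y - phat y| / ((1 - ε) * c0)) := by
        gcongr with y hy
        · exact hpAnonneg y γ
        · exact div_le_one_add_abs_sub_div hK (hmarg_ge y hy)
    _ ≤ 1 + ∑ y ∈ range (N + 1), |marginD pA p y - phat y| / ((1 - ε) * c0) :=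
        sum_mul_one_add_le_one_add_sum (fun y _ => hpAnonneg y γ) (hpAsum γ hγ)
          (fun y _ => by positivity)
    _ = 1 + 1 / (1 - ε) * (∑ y ∈ range (N + 1), |marginD pA p y - phat y|) / c0 := by
        rw [← sum_div]
        field_simp

/-- **Lemma (pointwise growth bound for the NPEM update).**
Assume `c₀ = min_y p̂(y) > 0`.  If `p` is a probability density on `[0,1]` with
positive implied marginals and `‖p_MA − p̂‖₁ ≤ ε·c₀` for some `ε ∈ (0,1)`, then its
unregularized NPEM update `p′` satisfies, for every `γ ∈ [0,1]`,
`p′(γ) ≤ p(γ)·(1 + (1/(1−ε))·‖p_MA − p̂‖₁/c₀)`. -/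
theorem npem_update_pointwise_bound
    (N : ℕ) (pA : ℕ → ℝ → ℝ) (phat : ℕ → ℝ)
    (hpAmeas : ∀ y, Measurable (pA y)) (hpAnonneg : ∀ y γ, 0 ≤ pA y γ)
    (hpAsum : ∀ γ ∈ Set.Icc (0:ℝ) 1, ∑ y ∈ Finset.range (N + 1), pA y γ = 1)
    (hphat1 : ∑ y ∈ Finset.range (N + 1), phat y = 1) (hphatnn : ∀ y, 0 ≤ phat y)
    (c0 : ℝ) (hc0def : c0 = (Finset.range (N + 1)).inf' Finset.nonempty_range_add_one phat)
    (hc0pos : 0 < c0)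
    (p : ℝ → ℝ) (hp : IsDensity p)
    (hmarg : ∀ y ∈ Finset.range (N + 1), 0 < marginD pA p y)
    (ε : ℝ) (hε0 : 0 < ε) (hε1 : ε < 1)
    (hclose : ∑ y ∈ Finset.range (N + 1), |marginD pA p y - phat y| ≤ ε * c0) :
    ∀ γ ∈ Set.Icc (0:ℝ) 1,
      npUpd0 N pA phat p γ
        ≤ p γ * (1 + (1 / (1 - ε)) *
            (∑ y ∈ Finset.range (N + 1), |marginD pA p y - phat y|) / c0) :=
  npem_update_pointwise_bound_general N pA phat hpAnonneg hpAsum c0 hc0def hc0pos p hp ε hε1 hclose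
end

section
/- Consider the logit-normal latent family p(γ|x;θ) = (λ/(γ(1−γ)√(2π)))·exp(−(λ²/2)(logit(γ) − βᵀx)²) for γ ∈ (0,1), θ = (β,λ) ∈ ℝ^d × (0,∞), where logit(γ) = log(γ/(1−γ)). Let (X,Y) be a random pair with X ∈ ℝ^d and Y ∈ {0,…,N}, and define the population variational objective ℓ̃(θ) = E[∫₀¹ r(γ|Y)·log p(γ|X;θ) dγ]. Assume: (1) E‖X‖₂ < ∞; (2) E‖XXᵀ‖₂ < ∞ (spectral norm) and E[XXᵀ] is invertible; (3) inf_{y∈{0,…,N}} ∫₀¹ p_A(y|γ) dγ ≥ b for some b > 0; (4) there exists y* with P(Y = y*) > 0 and r(γ|y*) > 0 for all γ in some set Λ ⊆ [0,1] of positive Lebesgue measure. Then ℓ̃ has a unique maximizer θ̃ = (β̃, λ̃) over ℝ^d × (0,∞), given in closed form by β̃ = (E[XXᵀ])⁻¹ · E[X·∫₀¹ r(γ|Y)·logit(γ) dγ] and 1/λ̃² = E[∫₀¹ r(γ|Y)·(logit(γ) − β̃ᵀX)² dγ]. -/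
/-!
Up to the term `∫ r(γ|y) log (γ(1-γ)√(2π)) dγ`, which does not depend on `θ`, the inner integral
`∫ r(γ|y) log p(γ|x;θ) dγ` equals `log λ - (λ²/2) ∫ r(γ|y) (logit γ - βᵀx)² dγ`, and the
bias–variance split turns the last integral into `Var_r(logit | y) + (m(y) - βᵀx)²`, where `m(y)`
is the `r(·|y)`-mean of `logit`. Hence `ℓ̃(β, λ) = log λ - C - (λ²/2) Q(β)` with
`Q(β) = E[Var_r(logit | Y)] + E[(m(Y) - βᵀX)²]`, a least-squares objective: the normal equations
`E[XXᵀ] β̃ = E[X m(Y)]` give `Q(β) = Q(β̃) + (β - β̃)ᵀ E[XXᵀ] (β - β̃)`, and an invertible Gram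
matrix is positive definite. Assumption (4) makes `Q(β̃) > 0`, and `λ ↦ log λ - λ² Q(β̃) / 2` has
its unique maximum at `λ = Q(β̃)^(-1/2)`.
-/

open MeasureTheory Set Filter Topology

/-- The logit function `logit(γ) = log(γ/(1−γ))`. -/
noncomputable def logit (γ : ℝ) : ℝ := Real.log (γ / (1 - γ))

/-- The logit-normal latent family
`p(γ|x;θ) = (λ/(γ(1−γ)√(2π)))·exp(−(λ²/2)(logit(γ) − βᵀx)²)` with `θ = (β, λ)`. -/
noncomputable def logitNormal (d : ℕ) (β : Fin d → ℝ) (lam : ℝ) (x : Fin d → ℝ)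
    (γ : ℝ) : ℝ :=
  lam / (γ * (1 - γ) * Real.sqrt (2 * Real.pi)) *
    Real.exp (-(lam ^ 2 / 2) * (logit γ - ∑ i, β i * x i) ^ 2)

/-- The normalized kernel `r(γ|y) = p_A(y|γ) / b_y` where `b_y = ∫₀¹ p_A(y|γ) dγ`. -/
noncomputable def rK (pA : ℕ → ℝ → ℝ) (y : ℕ) (γ : ℝ) : ℝ :=
  pA y γ / ∫ x, pA y x ∂lebI

open Real Matrix
open scoped ENNReal

instance : IsFiniteMeasure lebI := by
  unfold lebI; infer_instance

lemma ae_mem_Ioo_lebI : ∀ᵐ x ∂lebI, x ∈ Ioo (0 : ℝ) 1 := by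
  rw [lebI, ← Measure.restrict_congr_set Ioo_ae_eq_Icc]
  exact ae_restrict_mem measurableSet_Ioo

lemma integrable_lebI_iff_intervalIntegrable {f : ℝ → ℝ} :
    Integrable f lebI ↔ IntervalIntegrable f volume 0 1 :=
  (intervalIntegrable_iff_integrableOn_Icc_of_le zero_le_one).symm

lemma integrable_comp_one_sub_lebI {f : ℝ → ℝ} (hf : Integrable f lebI) :
    Integrable (fun x => f (1 - x)) lebI := by
  rw [integrable_lebI_iff_intervalIntegrable] at hf ⊢
  simpa using (hf.comp_sub_left 1).symm

lemma sq_log_le_rpow {x : ℝ} (hx₀ : 0 < x) (hx₁ : x ≤ 1) :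
    Real.log x ^ 2 ≤ 16 * x ^ (-(1 / 2) : ℝ) := by
  have hlog : |Real.log x| ≤ 4 * x ^ (-(1 / 4) : ℝ) := by
    rw [abs_of_nonpos (Real.log_nonpos hx₀.le hx₁), ← Real.log_inv, ← Real.rpow_neg_one]
    have := Real.log_le_rpow_div (x := x ^ (-1 : ℝ)) (by positivity) (by norm_num : (0 : ℝ) < 1 / 4)
    rw [← Real.rpow_mul hx₀.le] at this
    linarith [show x ^ ((-1 : ℝ) * (1 / 4)) / (1 / 4) = 4 * x ^ (-(1 / 4) : ℝ) by norm_num; ring]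
  calc Real.log x ^ 2 = |Real.log x| ^ 2 := (sq_abs _).symm
    _ ≤ (4 * x ^ (-(1 / 4) : ℝ)) ^ 2 := pow_le_pow_left₀ (abs_nonneg _) hlog 2
    _ = 16 * x ^ (-(1 / 2) : ℝ) := by
      rw [mul_pow, ← Real.rpow_natCast (x ^ _), ← Real.rpow_mul hx₀.le]; norm_num

lemma memLp_log_lebI : MemLp Real.log 2 lebI := by
  refine (memLp_two_iff_integrable_sq Real.measurable_log.aestronglyMeasurable).2 ?_
  have hdom : Integrable (fun x : ℝ => 16 * x ^ (-(1 / 2) : ℝ)) lebI := by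
    rw [integrable_lebI_iff_intervalIntegrable]
    exact (intervalIntegral.intervalIntegrable_rpow' (by norm_num)).const_mul 16
  refine hdom.mono' (Real.measurable_log.pow_const 2).aestronglyMeasurable ?_
  filter_upwards [ae_mem_Ioo_lebI] with x hx
  rw [Real.norm_eq_abs, abs_of_nonneg (sq_nonneg _)]
  exact sq_log_le_rpow hx.1 hx.2.le

lemma memLp_log_one_sub_lebI : MemLp (fun x => Real.log (1 - x)) 2 lebI := by
  have hmeas : Measurable fun x : ℝ => Real.log (1 - x) := by fun_prop
  exact (memLp_two_iff_integrable_sq hmeas.aestronglyMeasurable).2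
    (integrable_comp_one_sub_lebI memLp_log_lebI.integrable_sq)

lemma logit_eq_log_sub_log {γ : ℝ} (hγ : γ ∈ Ioo (0 : ℝ) 1) :
    logit γ = Real.log γ - Real.log (1 - γ) :=
  Real.log_div hγ.1.ne' (sub_pos.2 hγ.2).ne'

lemma memLp_logit_lebI : MemLp logit 2 lebI :=
  (memLp_log_lebI.sub memLp_log_one_sub_lebI).ae_eq <| by
    filter_upwards [ae_mem_Ioo_lebI] with γ hγ using (logit_eq_log_sub_log hγ).symm

lemma integrable_log_mul_one_sub_mul_lebI {c : ℝ} (hc : c ≠ 0) :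
    Integrable (fun γ => Real.log (γ * (1 - γ) * c)) lebI := by
  refine (((memLp_log_lebI.integrable one_le_two).add
    (memLp_log_one_sub_lebI.integrable one_le_two)).add (integrable_const (Real.log c))).congr ?_
  filter_upwards [ae_mem_Ioo_lebI] with γ hγ
  rw [Real.log_mul (mul_pos hγ.1 (sub_pos.2 hγ.2)).ne' hc,
    Real.log_mul hγ.1.ne' (sub_pos.2 hγ.2).ne']
  rfl

lemma logit_injOn : InjOn logit (Ioo 0 1) := by
  intro x hx y hy hxy
  have hx' : 0 < x / (1 - x) := div_pos hx.1 (sub_pos.2 hx.2)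
  have hy' : 0 < y / (1 - y) := div_pos hy.1 (sub_pos.2 hy.2)
  have := Real.log_injOn_pos hx' hy' hxy
  rw [div_eq_div_iff (sub_pos.2 hx.2).ne' (sub_pos.2 hy.2).ne'] at this
  linarith

lemma integrable_sq_logit_sub_lebI (c : ℝ) : Integrable (fun γ => (logit γ - c) ^ 2) lebI :=
  (memLp_logit_lebI.sub (memLp_const c)).integrable_sq

lemma log_logitNormal {d : ℕ} (β x : Fin d → ℝ) {lam γ : ℝ} (hlam : 0 < lam)
    (hγ : γ ∈ Ioo (0 : ℝ) 1) :
    Real.log (logitNormal d β lam x γ) = Real.log lam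
      - Real.log (γ * (1 - γ) * √(2 * π)) - lam ^ 2 / 2 * (logit γ - β ⬝ᵥ x) ^ 2 := by
  have hden : 0 < γ * (1 - γ) * √(2 * π) := by
    have := sub_pos.2 hγ.2
    have := hγ.1
    positivity
  rw [logitNormal, Real.log_mul (div_pos hlam hden).ne' (Real.exp_pos _).ne',
    Real.log_div hlam.ne' hden.ne', Real.log_exp]
  simp only [dotProduct]
  ring

noncomputable def logitMean (w : ℝ → ℝ) : ℝ := ∫ γ, w γ * logit γ ∂lebI

noncomputable def logitVar (w : ℝ → ℝ) : ℝ := ∫ γ, w γ * (logit γ - logitMean w) ^ 2 ∂lebI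

section Weight

variable {w : ℝ → ℝ}

lemma integral_mul_sq_logit_sub (hw : MemLp w ∞ lebI) (hw1 : ∫ γ, w γ ∂lebI = 1) (a : ℝ) :
    ∫ γ, w γ * (logit γ - a) ^ 2 ∂lebI = logitVar w + (logitMean w - a) ^ 2 := by
  set m := logitMean w
  have hvar : Integrable (fun γ => w γ * (logit γ - m) ^ 2) lebI :=
    (integrable_sq_logit_sub_lebI m).mul_of_top_right hw
  have hmean : Integrable (fun γ => w γ * logit γ) lebI :=
    (memLp_logit_lebI.integrable one_le_two).mul_of_top_right hw
  calc ∫ γ, w γ * (logit γ - a) ^ 2 ∂lebI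
      = ∫ γ, w γ * (logit γ - m) ^ 2 + 2 * (m - a) * (w γ * logit γ)
          + ((m - a) ^ 2 - 2 * (m - a) * m) * w γ ∂lebI :=
        integral_congr_ae (ae_of_all _ fun γ => by ring)
    _ = logitVar w + (m - a) ^ 2 := by
        rw [integral_add ?_ ((hw.integrable le_top).const_mul _),
          integral_add hvar (hmean.const_mul _), integral_const_mul, integral_const_mul, hw1]
        · simp only [logitVar, m, logitMean]
          ring
        · exact hvar.add (hmean.const_mul _)

lemma integral_mul_log_logitNormal (hw : MemLp w ∞ lebI) (hw1 : ∫ γ, w γ ∂lebI = 1) {d : ℕ}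
    (β x : Fin d → ℝ) {lam : ℝ} (hlam : 0 < lam) :
    ∫ γ, w γ * Real.log (logitNormal d β lam x γ) ∂lebI = Real.log lam
      - ∫ γ, w γ * Real.log (γ * (1 - γ) * √(2 * π)) ∂lebI
      - lam ^ 2 / 2 * ∫ γ, w γ * (logit γ - β ⬝ᵥ x) ^ 2 ∂lebI := by
  have hnorm : Integrable (fun γ => w γ * Real.log (γ * (1 - γ) * √(2 * π))) lebI :=
    (integrable_log_mul_one_sub_mul_lebI (by positivity)).mul_of_top_right hw
  have hsq : Integrable (fun γ => w γ * (logit γ - β ⬝ᵥ x) ^ 2) lebI :=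
    (integrable_sq_logit_sub_lebI _).mul_of_top_right hw
  calc ∫ γ, w γ * Real.log (logitNormal d β lam x γ) ∂lebI
      = ∫ γ, Real.log lam * w γ - w γ * Real.log (γ * (1 - γ) * √(2 * π))
          - lam ^ 2 / 2 * (w γ * (logit γ - β ⬝ᵥ x) ^ 2) ∂lebI := by
        refine integral_congr_ae ?_
        filter_upwards [ae_mem_Ioo_lebI] with γ hγ
        rw [log_logitNormal β x hlam hγ]
        ring
    _ = _ := by
        rw [integral_sub ?_ (hsq.const_mul _),
          integral_sub ((hw.integrable le_top).const_mul _) hnorm, integral_const_mul,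
          integral_const_mul, hw1, mul_one]
        exact ((hw.integrable le_top).const_mul _).sub hnorm

lemma integral_mul_sq_logit_sub_pos (hw0 : ∀ γ, 0 ≤ w γ) (hw : MemLp w ∞ lebI)
    {Λ : Set ℝ} (hΛ : 0 < lebI Λ) (hwΛ : ∀ γ ∈ Λ, 0 < w γ) (a : ℝ) :
    0 < ∫ γ, w γ * (logit γ - a) ^ 2 ∂lebI := by
  have hlevel : ({γ | γ ∈ Ioo 0 1 ∧ logit γ = a} : Set ℝ).Subsingleton :=
    fun x hx y hy => logit_injOn hx.1 hy.1 (hx.2.trans hy.2.symm)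
  have hsupp : Λ ≤ᵐ[lebI] Function.support fun γ => w γ * (logit γ - a) ^ 2 := by
    filter_upwards [ae_mem_Ioo_lebI, ae_restrict_of_ae
      (measure_eq_zero_iff_ae_notMem.1 (hlevel.measure_zero volume))]
      with γ hγ hne hγΛ
    exact mul_ne_zero (hwΛ γ hγΛ).ne' (pow_ne_zero 2 (sub_ne_zero.2 fun h => hne ⟨hγ, h⟩))
  refine (integral_pos_iff_support_of_nonneg (fun γ => mul_nonneg (hw0 γ) (sq_nonneg _))
    ((integrable_sq_logit_sub_lebI a).mul_of_top_right hw)).2 ?_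
  exact hΛ.trans_le (measure_mono_ae hsupp)

end Weight

section LeastSquares

variable {Ω ι : Type*} [MeasurableSpace Ω] [Fintype ι] {μ : Measure Ω} {X : Ω → ι → ℝ}

lemma MeasureTheory.MemLp.integrable_mul_two {f g : Ω → ℝ} (hf : MemLp f 2 μ) (hg : MemLp g 2 μ) :
    Integrable (fun ω => f ω * g ω) μ :=
  hf.integrable_mul hg

lemma memLp_two_apply_of_integrable_sum_sq (hX : Measurable X)
    (hX2 : Integrable (fun ω => ∑ i, X ω i ^ 2) μ) (i : ι) : MemLp (fun ω => X ω i) 2 μ := by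
  have hXi : Measurable fun ω => X ω i := (measurable_pi_apply i).comp hX
  refine (memLp_two_iff_integrable_sq hXi.aestronglyMeasurable).2
    (hX2.mono' (hXi.pow_const 2).aestronglyMeasurable (ae_of_all _ fun ω => ?_))
  rw [Real.norm_eq_abs, abs_of_nonneg (sq_nonneg _)]
  exact Finset.single_le_sum (fun j _ => sq_nonneg (X ω j)) (Finset.mem_univ i)

noncomputable def secondMoment (μ : Measure Ω) (X : Ω → ι → ℝ) : Matrix ι ι ℝ :=
  Matrix.of fun i j => ∫ ω, X ω i * X ω j ∂μ

noncomputable def crossMoment (μ : Measure Ω) (X : Ω → ι → ℝ) (L : Ω → ℝ) : ι → ℝ :=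
  fun i => ∫ ω, X ω i * L ω ∂μ

lemma memLp_dotProduct (hX : ∀ i, MemLp (fun ω => X ω i) 2 μ) (β : ι → ℝ) :
    MemLp (fun ω => β ⬝ᵥ X ω) 2 μ :=
  memLp_finsetSum Finset.univ fun i _ => (hX i).const_mul (β i)

lemma integral_dotProduct_mul (hX : ∀ i, MemLp (fun ω => X ω i) 2 μ) {L : Ω → ℝ}
    (hL : MemLp L 2 μ) (β : ι → ℝ) :
    ∫ ω, β ⬝ᵥ X ω * L ω ∂μ = β ⬝ᵥ crossMoment μ X L := by
  simp only [dotProduct, Finset.sum_mul, crossMoment]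
  rw [integral_finsetSum _ fun i _ => ((hX i).const_mul (β i)).integrable_mul_two hL]
  refine Finset.sum_congr rfl fun i _ => ?_
  rw [← integral_const_mul]
  simp only [mul_assoc]

lemma crossMoment_dotProduct (hX : ∀ i, MemLp (fun ω => X ω i) 2 μ) (δ : ι → ℝ) :
    crossMoment μ X (fun ω => δ ⬝ᵥ X ω) = secondMoment μ X *ᵥ δ := by
  ext i
  calc ∫ ω, X ω i * δ ⬝ᵥ X ω ∂μ = ∫ ω, δ ⬝ᵥ X ω * X ω i ∂μ := by simp only [mul_comm]
    _ = δ ⬝ᵥ crossMoment μ X (fun ω => X ω i) := integral_dotProduct_mul hX (hX i) δ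
    _ = (secondMoment μ X *ᵥ δ) i := by
      simp only [mulVec, dotProduct, secondMoment, crossMoment, of_apply, mul_comm]

lemma integral_dotProduct_mul_dotProduct (hX : ∀ i, MemLp (fun ω => X ω i) 2 μ) (β δ : ι → ℝ) :
    ∫ ω, β ⬝ᵥ X ω * δ ⬝ᵥ X ω ∂μ = β ⬝ᵥ secondMoment μ X *ᵥ δ := by
  rw [integral_dotProduct_mul hX (memLp_dotProduct hX δ), crossMoment_dotProduct hX]

lemma posSemidef_secondMoment (hX : ∀ i, MemLp (fun ω => X ω i) 2 μ) :
    (secondMoment μ X).PosSemidef := by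
  refine .of_dotProduct_mulVec_nonneg ?_ fun x => ?_
  · ext i j
    simp only [conjTranspose_apply, star_trivial, secondMoment, of_apply, mul_comm]
  · rw [star_trivial, ← integral_dotProduct_mul_dotProduct hX]
    exact integral_nonneg fun ω => mul_self_nonneg _

lemma integral_sq_sub_dotProduct (hX : ∀ i, MemLp (fun ω => X ω i) 2 μ) {L : Ω → ℝ}
    (hL : MemLp L 2 μ) {β₀ : ι → ℝ} (hβ₀ : secondMoment μ X *ᵥ β₀ = crossMoment μ X L)
    (β : ι → ℝ) :
    ∫ ω, (L ω - β ⬝ᵥ X ω) ^ 2 ∂μ =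
      ∫ ω, (L ω - β₀ ⬝ᵥ X ω) ^ 2 ∂μ + (β - β₀) ⬝ᵥ secondMoment μ X *ᵥ (β - β₀) := by
  have hδ := memLp_dotProduct hX (β - β₀)
  have hres : MemLp (fun ω => L ω - β₀ ⬝ᵥ X ω) 2 μ := hL.sub (memLp_dotProduct hX β₀)
  have horth : ∫ ω, (β - β₀) ⬝ᵥ X ω * (L ω - β₀ ⬝ᵥ X ω) ∂μ = 0 := by
    simp only [mul_sub]
    rw [integral_sub (hδ.integrable_mul_two hL) (hδ.integrable_mul_two (memLp_dotProduct hX β₀)),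
      integral_dotProduct_mul hX hL, integral_dotProduct_mul_dotProduct hX, hβ₀, sub_self]
  calc ∫ ω, (L ω - β ⬝ᵥ X ω) ^ 2 ∂μ
      = ∫ ω, (L ω - β₀ ⬝ᵥ X ω) ^ 2 + (β - β₀) ⬝ᵥ X ω * (β - β₀) ⬝ᵥ X ω
          - 2 * ((β - β₀) ⬝ᵥ X ω * (L ω - β₀ ⬝ᵥ X ω)) ∂μ := by
        refine integral_congr_ae (ae_of_all _ fun ω => ?_)
        simp only [sub_dotProduct]
        ring
    _ = _ := by
        rw [integral_sub ?_ ((hδ.integrable_mul_two hres).const_mul 2), integral_const_mul, horth,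
          integral_add hres.integrable_sq (hδ.integrable_mul_two hδ),
          integral_dotProduct_mul_dotProduct hX]
        · ring
        · exact hres.integrable_sq.add (hδ.integrable_mul_two hδ)

end LeastSquares

lemma memLp_top_rK {pA : ℕ → ℝ → ℝ} {s : Finset ℕ} (hmeas : ∀ y, Measurable (pA y))
    (hnonneg : ∀ y γ, 0 ≤ pA y γ) (hsum : ∀ γ ∈ Icc (0 : ℝ) 1, ∑ y ∈ s, pA y γ = 1) {y : ℕ}
    (hy : y ∈ s) : MemLp (rK pA y) ∞ lebI := by
  refine memLp_top_of_bound ((hmeas y).div_const _).aestronglyMeasurable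
    (1 / |∫ t, pA y t ∂lebI|) ?_
  filter_upwards [ae_restrict_mem measurableSet_Icc] with γ hγ
  rw [rK, Real.norm_eq_abs, abs_div, abs_of_nonneg (hnonneg y γ)]
  refine div_le_div_of_nonneg_right ?_ (abs_nonneg _)
  exact hsum γ hγ ▸ Finset.single_le_sum (fun y _ => hnonneg y γ) hy

lemma integral_rK {pA : ℕ → ℝ → ℝ} {y : ℕ} (h : ∫ t, pA y t ∂lebI ≠ 0) :
    ∫ γ, rK pA y γ ∂lebI = 1 := by
  simp only [rK, integral_div]
  exact div_self h

lemma rK_nonneg {pA : ℕ → ℝ → ℝ} {y : ℕ} (h : ∀ γ, 0 ≤ pA y γ) (γ : ℝ) : 0 ≤ rK pA y γ :=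
  div_nonneg (h γ) (integral_nonneg h)

section Mixture

variable {Ω α ι : Type*} [Fintype ι] {X : Ω → ι → ℝ} {Y : Ω → α} {s : Finset α}
  {w : α → ℝ → ℝ}

lemma integral_mul_sq_logit_sub_comp_eq (hw : ∀ y ∈ s, MemLp (w y) ∞ lebI)
    (hw1 : ∀ y ∈ s, ∫ γ, w y γ ∂lebI = 1) (hYs : ∀ ω, Y ω ∈ s) (β : ι → ℝ) :
    (fun ω => ∫ γ, w (Y ω) γ * (logit γ - β ⬝ᵥ X ω) ^ 2 ∂lebI) =
      fun ω => logitVar (w (Y ω)) + (logitMean (w (Y ω)) - β ⬝ᵥ X ω) ^ 2 := by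
  ext ω
  exact integral_mul_sq_logit_sub (hw _ (hYs ω)) (hw1 _ (hYs ω)) _

variable [MeasurableSpace Ω] [MeasurableSpace α] [Countable α] [MeasurableSingletonClass α]
  {P : Measure Ω}

lemma memLp_comp_of_forall_mem [IsFiniteMeasure P] (hY : Measurable Y) (hYs : ∀ ω, Y ω ∈ s)
    (g : α → ℝ) (p : ℝ≥0∞) : MemLp (fun ω => g (Y ω)) p P := by
  refine .of_bound ((measurable_of_countable g).comp hY).aestronglyMeasurable (∑ y ∈ s, |g y|)
    (ae_of_all _ fun ω => ?_)
  rw [Real.norm_eq_abs]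
  exact Finset.single_le_sum (fun y _ => abs_nonneg (g y)) (hYs ω)

lemma integrable_integral_mul_sq_logit_sub [IsFiniteMeasure P] (hY : Measurable Y)
    (hYs : ∀ ω, Y ω ∈ s) (hw : ∀ y ∈ s, MemLp (w y) ∞ lebI)
    (hw1 : ∀ y ∈ s, ∫ γ, w y γ ∂lebI = 1) (hX : ∀ i, MemLp (fun ω => X ω i) 2 P) (β : ι → ℝ) :
    Integrable (fun ω => ∫ γ, w (Y ω) γ * (logit γ - β ⬝ᵥ X ω) ^ 2 ∂lebI) P := by
  rw [integral_mul_sq_logit_sub_comp_eq hw hw1 hYs]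
  exact (memLp_one_iff_integrable.1 (memLp_comp_of_forall_mem hY hYs (logitVar ∘ w) 1)).add
    ((memLp_comp_of_forall_mem hY hYs (logitMean ∘ w) 2).sub
      (memLp_dotProduct hX β)).integrable_sq

lemma integral_integral_mul_sq_logit_sub [IsFiniteMeasure P] (hY : Measurable Y)
    (hYs : ∀ ω, Y ω ∈ s) (hw : ∀ y ∈ s, MemLp (w y) ∞ lebI)
    (hw1 : ∀ y ∈ s, ∫ γ, w y γ ∂lebI = 1) (hX : ∀ i, MemLp (fun ω => X ω i) 2 P) (β : ι → ℝ) :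
    ∫ ω, ∫ γ, w (Y ω) γ * (logit γ - β ⬝ᵥ X ω) ^ 2 ∂lebI ∂P =
      ∫ ω, logitVar (w (Y ω)) ∂P + ∫ ω, (logitMean (w (Y ω)) - β ⬝ᵥ X ω) ^ 2 ∂P := by
  rw [integral_mul_sq_logit_sub_comp_eq hw hw1 hYs, integral_add]
  · exact memLp_one_iff_integrable.1 (memLp_comp_of_forall_mem hY hYs (logitVar ∘ w) 1)
  · exact ((memLp_comp_of_forall_mem hY hYs (logitMean ∘ w) 2).sub
      (memLp_dotProduct hX β)).integrable_sq

lemma integral_integral_mul_sq_logit_sub_eq_add [IsFiniteMeasure P] (hY : Measurable Y)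
    (hYs : ∀ ω, Y ω ∈ s) (hw : ∀ y ∈ s, MemLp (w y) ∞ lebI)
    (hw1 : ∀ y ∈ s, ∫ γ, w y γ ∂lebI = 1) (hX : ∀ i, MemLp (fun ω => X ω i) 2 P) {β₀ : ι → ℝ}
    (hβ₀ : secondMoment P X *ᵥ β₀ = crossMoment P X fun ω => logitMean (w (Y ω))) (β : ι → ℝ) :
    ∫ ω, ∫ γ, w (Y ω) γ * (logit γ - β ⬝ᵥ X ω) ^ 2 ∂lebI ∂P =
      ∫ ω, ∫ γ, w (Y ω) γ * (logit γ - β₀ ⬝ᵥ X ω) ^ 2 ∂lebI ∂P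
        + (β - β₀) ⬝ᵥ secondMoment P X *ᵥ (β - β₀) := by
  have hL : MemLp (fun ω => logitMean (w (Y ω))) 2 P :=
    memLp_comp_of_forall_mem hY hYs (logitMean ∘ w) 2
  rw [integral_integral_mul_sq_logit_sub hY hYs hw hw1 hX,
    integral_integral_mul_sq_logit_sub hY hYs hw hw1 hX, integral_sq_sub_dotProduct hX hL hβ₀ β]
  ring

lemma integral_integral_mul_sq_logit_sub_pos [IsFiniteMeasure P] (hY : Measurable Y)
    (hYs : ∀ ω, Y ω ∈ s) (hw : ∀ y ∈ s, MemLp (w y) ∞ lebI)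
    (hw1 : ∀ y ∈ s, ∫ γ, w y γ ∂lebI = 1) (hw0 : ∀ y ∈ s, ∀ γ, 0 ≤ w y γ)
    (hX : ∀ i, MemLp (fun ω => X ω i) 2 P) {y₀ : α} (hy₀ : 0 < P {ω | Y ω = y₀})
    {Λ : Set ℝ} (hΛ : 0 < lebI Λ) (hwΛ : ∀ γ ∈ Λ, 0 < w y₀ γ) (β : ι → ℝ) :
    0 < ∫ ω, ∫ γ, w (Y ω) γ * (logit γ - β ⬝ᵥ X ω) ^ 2 ∂lebI ∂P := by
  refine (integral_pos_iff_support_of_nonneg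
    (fun ω => integral_nonneg fun γ => mul_nonneg (hw0 _ (hYs ω) γ) (sq_nonneg _))
    (integrable_integral_mul_sq_logit_sub hY hYs hw hw1 hX β)).2 (hy₀.trans_le (measure_mono ?_))
  intro ω (hω : Y ω = y₀)
  have hy₀s := hω ▸ hYs ω
  rw [Function.mem_support, hω]
  exact (integral_mul_sq_logit_sub_pos (hw0 _ hy₀s) (hw _ hy₀s) hΛ hwΛ _).ne'

lemma integral_integral_mul_log_logitNormal [IsProbabilityMeasure P] {d : ℕ}
    {X : Ω → Fin d → ℝ} (hY : Measurable Y) (hYs : ∀ ω, Y ω ∈ s)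
    (hw : ∀ y ∈ s, MemLp (w y) ∞ lebI) (hw1 : ∀ y ∈ s, ∫ γ, w y γ ∂lebI = 1)
    (hX : ∀ i, MemLp (fun ω => X ω i) 2 P) (β : Fin d → ℝ) {lam : ℝ} (hlam : 0 < lam) :
    ∫ ω, ∫ γ, w (Y ω) γ * Real.log (logitNormal d β lam (X ω) γ) ∂lebI ∂P = Real.log lam
      - ∫ ω, ∫ γ, w (Y ω) γ * Real.log (γ * (1 - γ) * √(2 * π)) ∂lebI ∂P
      - lam ^ 2 / 2 * ∫ ω, ∫ γ, w (Y ω) γ * (logit γ - β ⬝ᵥ X ω) ^ 2 ∂lebI ∂P := by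
  have hnorm := memLp_one_iff_integrable.1 (memLp_comp_of_forall_mem (P := P) hY hYs
    (fun y => ∫ γ, w y γ * Real.log (γ * (1 - γ) * √(2 * π)) ∂lebI) 1)
  have hsq := (integrable_integral_mul_sq_logit_sub hY hYs hw hw1 hX β).const_mul (lam ^ 2 / 2)
  rw [integral_congr_ae (ae_of_all _ fun ω =>
      integral_mul_log_logitNormal (hw _ (hYs ω)) (hw1 _ (hYs ω)) β (X ω) hlam),
    integral_sub ?_ hsq, integral_sub (integrable_const _) hnorm, integral_const,
    integral_const_mul]
  · simp
  · exact (integrable_const _).sub hnorm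

end Mixture

lemma log_sub_sq_mul_lt {V lam : ℝ} (hV : 0 < V) (hlam : 0 < lam) (hne : lam ≠ 1 / √V) :
    Real.log lam - lam ^ 2 / 2 * V < Real.log (1 / √V) - 1 / 2 := by
  have hs : 0 < √V := Real.sqrt_pos.2 hV
  set t := lam * √V
  have ht : 0 < t := mul_pos hlam hs
  have ht1 : t ^ 2 ≠ 1 := by
    rw [Ne, pow_eq_one_iff_of_nonneg ht.le two_ne_zero]
    exact fun h => hne (by rw [eq_div_iff hs.ne', ← h])
  have hlog : Real.log lam - Real.log (1 / √V) = Real.log (t ^ 2) / 2 := by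
    rw [Real.log_pow, one_div, Real.log_inv, Real.log_mul hlam.ne' hs.ne']
    push_cast
    ring
  have hsq : lam ^ 2 * V = t ^ 2 := by rw [mul_pow, Real.sq_sqrt hV.le]
  have := Real.log_lt_sub_one_of_pos (pow_pos ht 2) ht1
  linarith

lemma log_sub_sq_mul_lt_of_ne {α : Type*} {Q : α → ℝ} {x₀ : α} (hQ₀ : 0 < Q x₀)
    (hQ : ∀ x ≠ x₀, Q x₀ < Q x) {x : α} {lam : ℝ} (hlam : 0 < lam)
    (hne : (x, lam) ≠ (x₀, 1 / √(Q x₀))) :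
    Real.log lam - lam ^ 2 / 2 * Q x
      < Real.log (1 / √(Q x₀)) - (1 / √(Q x₀)) ^ 2 / 2 * Q x₀ := by
  have hopt : (1 / √(Q x₀)) ^ 2 / 2 * Q x₀ = 1 / 2 := by
    rw [div_pow, one_pow, Real.sq_sqrt hQ₀.le]
    field_simp
  rw [hopt]
  rcases eq_or_ne x x₀ with rfl | hx
  · exact log_sub_sq_mul_lt hQ₀ hlam fun h => hne (by rw [h])
  · calc Real.log lam - lam ^ 2 / 2 * Q x < Real.log lam - lam ^ 2 / 2 * Q x₀ := by
          gcongr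
          exact hQ x hx
      _ ≤ Real.log (1 / √(Q x₀)) - 1 / 2 := by
          rcases eq_or_ne lam (1 / √(Q x₀)) with rfl | hl
          · rw [hopt]
          · exact (log_sub_sq_mul_lt hQ₀ hlam hl).le

theorem logit_normal_variational_closed_form_general
    (N d : ℕ) (pA : ℕ → ℝ → ℝ)
    (hpAmeas : ∀ y, Measurable (pA y)) (hpAnonneg : ∀ y γ, 0 ≤ pA y γ)
    (hpAsum : ∀ γ ∈ Set.Icc (0:ℝ) 1, ∑ y ∈ Finset.range (N + 1), pA y γ = 1)
    {Ωs : Type*} [MeasurableSpace Ωs] (P : Measure Ωs) [IsProbabilityMeasure P]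
    (X : Ωs → Fin d → ℝ) (Y : Ωs → ℕ) (hX : Measurable X) (hY : Measurable Y)
    (hYrange : ∀ ω, Y ω ∈ Finset.range (N + 1))
    -- (2): `E‖XXᵀ‖₂ < ∞` (spectral norm, `‖xxᵀ‖₂ = ‖x‖₂²`) and `E[XXᵀ]` invertible
    (hX2 : Integrable (fun ω => ∑ i, (X ω i) ^ 2) P)
    (hMinv : IsUnit (Matrix.of fun i j : Fin d => ∫ ω, X ω i * X ω j ∂P))
    -- (3): `inf_y ∫₀¹ p_A(y|γ) dγ ≥ b > 0`
    (b : ℝ) (hb : 0 < b) (hbA : ∀ y ∈ Finset.range (N + 1), b ≤ ∫ γ, pA y γ ∂lebI)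
    -- (4): some `y*` with `P(Y = y*) > 0` and `r(·|y*) > 0` on a set of positive measure
    (hystar : ∃ ystar ∈ Finset.range (N + 1), 0 < P {ω | Y ω = ystar} ∧
      ∃ Λ : Set ℝ, Λ ⊆ Set.Icc (0:ℝ) 1 ∧ MeasurableSet Λ ∧ 0 < volume Λ ∧
        ∀ γ ∈ Λ, 0 < rK pA ystar γ) :
    let M : Matrix (Fin d) (Fin d) ℝ := Matrix.of fun i j => ∫ ω, X ω i * X ω j ∂P
    let v : Fin d → ℝ := fun i => ∫ ω, X ω i * ∫ γ, rK pA (Y ω) γ * logit γ ∂lebI ∂P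
    let βT : Fin d → ℝ := M⁻¹.mulVec v
    let Vval : ℝ :=
      ∫ ω, ∫ γ, rK pA (Y ω) γ * (logit γ - ∑ i, βT i * X ω i) ^ 2 ∂lebI ∂P
    let lamT : ℝ := 1 / Real.sqrt Vval
    let ltil : (Fin d → ℝ) → ℝ → ℝ := fun β lam =>
      ∫ ω, ∫ γ, rK pA (Y ω) γ * Real.log (logitNormal d β lam (X ω) γ) ∂lebI ∂P
    (0 < lamT ∧ βT = M⁻¹.mulVec v ∧ 1 / lamT ^ 2 = Vval) ∧
    (∀ (β : Fin d → ℝ) (lam : ℝ), 0 < lam → ltil β lam ≤ ltil βT lamT) ∧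
    (∀ (β : Fin d → ℝ) (lam : ℝ), 0 < lam →
      ltil β lam = ltil βT lamT → β = βT ∧ lam = lamT) := by
  intro M v βT Vval lamT ltil
  have hw : ∀ y ∈ Finset.range (N + 1), MemLp (rK pA y) ∞ lebI := fun y =>
    memLp_top_rK hpAmeas hpAnonneg hpAsum
  have hw1 : ∀ y ∈ Finset.range (N + 1), ∫ γ, rK pA y γ ∂lebI = 1 := fun y hy =>
    integral_rK (hb.trans_le (hbA y hy)).ne'
  have hXi := memLp_two_apply_of_integrable_sum_sq hX hX2
  have hβT : secondMoment P X *ᵥ βT = crossMoment P X fun ω => logitMean (rK pA (Y ω)) := by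
    show M *ᵥ M⁻¹ *ᵥ v = v
    rw [mulVec_mulVec, mul_nonsing_inv _ ((isUnit_iff_isUnit_det M).1 hMinv), one_mulVec]
  set Q : (Fin d → ℝ) → ℝ := fun β =>
    ∫ ω, ∫ γ, rK pA (Y ω) γ * (logit γ - β ⬝ᵥ X ω) ^ 2 ∂lebI ∂P
  have hQ : ∀ β, β ≠ βT → Q βT < Q β := fun β hβ => by
    have hpos := ((posSemidef_secondMoment hXi).posDef_iff_isUnit.2 hMinv).dotProduct_mulVec_pos
      (sub_ne_zero.2 hβ)
    rw [star_trivial] at hpos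
    simp only [Q, integral_integral_mul_sq_logit_sub_eq_add hY hYrange hw hw1 hXi hβT β]
    linarith
  have hQpos : 0 < Q βT := by
    obtain ⟨y₀, -, hPy₀, Λ, hΛI, -, hΛ, hrΛ⟩ := hystar
    exact integral_integral_mul_sq_logit_sub_pos hY hYrange hw hw1
      (fun y _ => rK_nonneg (hpAnonneg y)) hXi hPy₀
      (by rwa [lebI, Measure.restrict_eq_self _ hΛI]) hrΛ βT
  have hltil : ∀ β lam, 0 < lam → ltil β lam = Real.log lam
      - ∫ ω, ∫ γ, rK pA (Y ω) γ * Real.log (γ * (1 - γ) * √(2 * π)) ∂lebI ∂P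
      - lam ^ 2 / 2 * Q β := fun β lam hlam =>
    integral_integral_mul_log_logitNormal hY hYrange hw hw1 hXi β hlam
  have hlamT : 0 < lamT := one_div_pos.2 (Real.sqrt_pos.2 hQpos)
  have hmax : ∀ β lam, 0 < lam → (β, lam) ≠ (βT, lamT) →
      Real.log lam - lam ^ 2 / 2 * Q β < Real.log lamT - lamT ^ 2 / 2 * Q βT :=
    fun β lam hlam hne => log_sub_sq_mul_lt_of_ne hQpos hQ hlam hne
  refine ⟨⟨hlamT, rfl, ?_⟩, fun β lam hlam => ?_, fun β lam hlam heq => ?_⟩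
  · show 1 / (1 / √(Q βT)) ^ 2 = Q βT
    rw [div_pow, one_pow, one_div_one_div, Real.sq_sqrt hQpos.le]
  · rcases eq_or_ne (β, lam) (βT, lamT) with h | h
    · obtain ⟨rfl, rfl⟩ := Prod.mk.inj h
      rfl
    · rw [hltil β lam hlam, hltil βT lamT hlamT]
      linarith [hmax β lam hlam h]
  · by_contra h
    rw [hltil β lam hlam, hltil βT lamT hlamT] at heq
    linarith [hmax β lam hlam fun h' => h (Prod.mk.inj h')]

/-- **Theorem (closed form for the variational logit-normal maximizer).**
Under the stated moment and nondegeneracy conditions, the population variational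
objective `ℓ̃(θ) = E[∫₀¹ r(γ|Y) log p(γ|X;θ) dγ]` has a unique maximizer
`θ̃ = (β̃, λ̃)` over `ℝ^d × (0,∞)`, given in closed form by
`β̃ = (E[XXᵀ])⁻¹ E[X ∫₀¹ r(γ|Y) logit(γ) dγ]` and
`1/λ̃² = E[∫₀¹ r(γ|Y)(logit(γ) − β̃ᵀX)² dγ]`. -/
theorem logit_normal_variational_closed_form
    (N d : ℕ) (pA : ℕ → ℝ → ℝ)
    (hpAmeas : ∀ y, Measurable (pA y)) (hpAnonneg : ∀ y γ, 0 ≤ pA y γ)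
    (hpAsum : ∀ γ ∈ Set.Icc (0:ℝ) 1, ∑ y ∈ Finset.range (N + 1), pA y γ = 1)
    {Ωs : Type*} [MeasurableSpace Ωs] (P : Measure Ωs) [IsProbabilityMeasure P]
    (X : Ωs → Fin d → ℝ) (Y : Ωs → ℕ) (hX : Measurable X) (hY : Measurable Y)
    (hYrange : ∀ ω, Y ω ∈ Finset.range (N + 1))
    -- (1): `E‖X‖₂ < ∞`
    (hX1 : Integrable (fun ω => Real.sqrt (∑ i, (X ω i) ^ 2)) P)
    -- (2): `E‖XXᵀ‖₂ < ∞` (spectral norm, `‖xxᵀ‖₂ = ‖x‖₂²`) and `E[XXᵀ]` invertible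
    (hX2 : Integrable (fun ω => ∑ i, (X ω i) ^ 2) P)
    (hMinv : IsUnit (Matrix.of fun i j : Fin d => ∫ ω, X ω i * X ω j ∂P))
    -- (3): `inf_y ∫₀¹ p_A(y|γ) dγ ≥ b > 0`
    (b : ℝ) (hb : 0 < b) (hbA : ∀ y ∈ Finset.range (N + 1), b ≤ ∫ γ, pA y γ ∂lebI)
    -- (4): some `y*` with `P(Y = y*) > 0` and `r(·|y*) > 0` on a set of positive measure
    (hystar : ∃ ystar ∈ Finset.range (N + 1), 0 < P {ω | Y ω = ystar} ∧
      ∃ Λ : Set ℝ, Λ ⊆ Set.Icc (0:ℝ) 1 ∧ MeasurableSet Λ ∧ 0 < volume Λ ∧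
        ∀ γ ∈ Λ, 0 < rK pA ystar γ) :
    let M : Matrix (Fin d) (Fin d) ℝ := Matrix.of fun i j => ∫ ω, X ω i * X ω j ∂P
    let v : Fin d → ℝ := fun i => ∫ ω, X ω i * ∫ γ, rK pA (Y ω) γ * logit γ ∂lebI ∂P
    let βT : Fin d → ℝ := M⁻¹.mulVec v
    let Vval : ℝ :=
      ∫ ω, ∫ γ, rK pA (Y ω) γ * (logit γ - ∑ i, βT i * X ω i) ^ 2 ∂lebI ∂P
    let lamT : ℝ := 1 / Real.sqrt Vval
    let ltil : (Fin d → ℝ) → ℝ → ℝ := fun β lam =>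
      ∫ ω, ∫ γ, rK pA (Y ω) γ * Real.log (logitNormal d β lam (X ω) γ) ∂lebI ∂P
    (0 < lamT ∧ βT = M⁻¹.mulVec v ∧ 1 / lamT ^ 2 = Vval) ∧
    (∀ (β : Fin d → ℝ) (lam : ℝ), 0 < lam → ltil β lam ≤ ltil βT lamT) ∧
    (∀ (β : Fin d → ℝ) (lam : ℝ), 0 < lam →
      ltil β lam = ltil βT lamT → β = βT ∧ lam = lamT) :=
  logit_normal_variational_closed_form_general N d pA hpAmeas hpAnonneg hpAsum P X Y hX hY hYrange
    hX2 hMinv b hb hbA hystar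
end
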